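/- arXiv:1802.09945 — 13 statements merged into one kernel-verified Lean document; each statement's English description precedes it below -/
import Mathlib

section
/- The intersection of the systems of sets of lengths 𝓛(H), taken over all numerical monoids H with H ≠ ℕ, equals { {0}, {1}, {2} }. That is, a finite set L ⊆ ℕ occurs as a set of lengths in every numerical monoid H ⊊ ℕ if and only if L ∈ { {0}, {1}, {2} }. -/
/-- A numerical monoid: an additive submonoid of `ℕ` whose complement in `ℕ` is finite. -/
def IsNumericalMonoid (H : AddSubmonoid ℕ) : Prop :=
  ((H : Set ℕ)ᶜ).Finite

/-- `u` is an atom of `H`: it is a nonzero element of `H` which cannot be written as the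
sum of two nonzero elements of `H`. -/
def IsAtomOf (H : AddSubmonoid ℕ) (u : ℕ) : Prop :=
  u ∈ H ∧ u ≠ 0 ∧ ∀ x y : ℕ, x ∈ H → y ∈ H → x ≠ 0 → y ≠ 0 → u ≠ x + y

/-- The set of atoms of `H`. -/
def atomSet (H : AddSubmonoid ℕ) : Set ℕ := {u | IsAtomOf H u}

/-- The set of lengths of `a`: all `k` such that `a` is a sum of `k` atoms of `H`.
(For `a = 0` this gives `{0}`, via the empty sum, matching the convention `L(0) = {0}`.) -/
def lengthSet (H : AddSubmonoid ℕ) (a : ℕ) : Set ℕ :=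
  {k | ∃ s : Multiset ℕ, Multiset.card s = k ∧ (∀ u ∈ s, IsAtomOf H u) ∧ s.sum = a}

/-- The system of sets of lengths of `H`. -/
def systemOfLengths (H : AddSubmonoid ℕ) : Set (Set ℕ) :=
  {L | ∃ a ∈ H, L = lengthSet H a}

namespace AuxNM

/-! ### Generic lemmas -/

lemma len_le {H : AddSubmonoid ℕ} {c a k : ℕ} (hb : ∀ u, IsAtomOf H u → u ≤ c)
    (hk : k ∈ lengthSet H a) : a ≤ k * c := by
  obtain ⟨s, hcard, hs, hsum⟩ := hk
  have h := Multiset.sum_le_card_nsmul s c (fun x hx => hb x (hs x hx))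
  rw [hsum, hcard, smul_eq_mul] at h
  exact h

lemma le_len {H : AddSubmonoid ℕ} {c a k : ℕ} (hb : ∀ u, IsAtomOf H u → c ≤ u)
    (hk : k ∈ lengthSet H a) : k * c ≤ a := by
  obtain ⟨s, hcard, hs, hsum⟩ := hk
  have h := Multiset.card_nsmul_le_sum (fun x hx => hb x (hs x hx))
  rw [hsum, hcard, smul_eq_mul] at h
  exact h

lemma pair_mem {H : AddSubmonoid ℕ} {u v a : ℕ} (hu : IsAtomOf H u) (hv : IsAtomOf H v)
    (h : u + v = a) : 2 ∈ lengthSet H a := by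
  refine ⟨{u, v}, by simp, ?_, by simp; omega⟩
  intro x hx
  simp only [Multiset.insert_eq_cons, Multiset.mem_cons, Multiset.mem_singleton] at hx
  rcases hx with rfl | rfl
  exacts [hu, hv]

lemma quad_mem {H : AddSubmonoid ℕ} {u v w x a : ℕ} (hu : IsAtomOf H u) (hv : IsAtomOf H v)
    (hw : IsAtomOf H w) (hx : IsAtomOf H x)
    (h : u + v + w + x = a) : 4 ∈ lengthSet H a := by
  refine ⟨{u, v, w, x}, by simp, ?_, by simp; omega⟩
  intro y hy
  simp only [Multiset.insert_eq_cons, Multiset.mem_cons, Multiset.mem_singleton] at hy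
  rcases hy with rfl | rfl | rfl | rfl
  exacts [hu, hv, hw, hx]

lemma len_zero (H : AddSubmonoid ℕ) : lengthSet H 0 = {0} := by
  ext k
  simp only [lengthSet, Set.mem_setOf_eq, Set.mem_singleton_iff]
  constructor
  · rintro ⟨s, hcard, hs, hsum⟩
    by_contra hk
    have hsne : s ≠ 0 := by rintro rfl; simp at hcard; omega
    obtain ⟨u, hu⟩ := Multiset.exists_mem_of_ne_zero hsne
    have hle : u ≤ s.sum := Multiset.single_le_sum (fun x _ => Nat.zero_le x) u hu
    rw [hsum] at hle
    exact (hs u hu).2.1 (by omega)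
  · rintro rfl
    exact ⟨0, rfl, by simp, rfl⟩

lemma len_one {H : AddSubmonoid ℕ} {m : ℕ} (hm : m ∈ H) (hm0 : m ≠ 0)
    (hmin : ∀ x, x ∈ H → x ≠ 0 → m ≤ x) : lengthSet H m = {1} := by
  have hatom : IsAtomOf H m := ⟨hm, hm0, fun x y hx hy hx0 hy0 => by
    have := hmin x hx hx0; have := hmin y hy hy0; omega⟩
  ext k
  simp only [Set.mem_singleton_iff]
  constructor
  · intro hk
    have hlow : k * m ≤ m := le_len (fun u hu => hmin u hu.1 hu.2.1) hk
    obtain ⟨s, hcard, hs, hsum⟩ := hk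
    rcases Nat.lt_or_ge k 2 with h2 | h2
    · interval_cases k
      · rw [Multiset.card_eq_zero] at hcard; subst hcard; simp at hsum; omega
      · rfl
    · exfalso
      have h2m : 2 * m ≤ k * m := Nat.mul_le_mul (by omega) le_rfl
      have : 2 * m ≤ m := le_trans h2m hlow
      omega
  · rintro rfl
    refine ⟨{m}, by simp, ?_, by simp⟩
    intro u hu
    rw [Multiset.mem_singleton] at hu
    subst hu
    exact hatom

lemma len_two {H : AddSubmonoid ℕ} {m : ℕ} (hm : m ∈ H) (hm0 : m ≠ 0)
    (hmin : ∀ x, x ∈ H → x ≠ 0 → m ≤ x) : lengthSet H (m + m) = {2} := by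
  have hatom : IsAtomOf H m := ⟨hm, hm0, fun x y hx hy hx0 hy0 => by
    have := hmin x hx hx0; have := hmin y hy hy0; omega⟩
  ext k
  simp only [Set.mem_singleton_iff]
  constructor
  · intro hk
    have hlow : k * m ≤ m + m := le_len (fun u hu => hmin u hu.1 hu.2.1) hk
    obtain ⟨s, hcard, hs, hsum⟩ := hk
    rcases Nat.lt_or_ge k 3 with h3 | h3
    · interval_cases k
      · rw [Multiset.card_eq_zero] at hcard; subst hcard; simp at hsum; omega
      · exfalso
        obtain ⟨u, rfl⟩ := Multiset.card_eq_one.mp hcard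
        have hu := hs u (Multiset.mem_singleton_self u)
        simp at hsum
        exact hu.2.2 m m hm hm hm0 hm0 hsum
      · rfl
    · exfalso
      have h3m : 3 * m ≤ k * m := Nat.mul_le_mul (by omega) le_rfl
      have : 3 * m ≤ m + m := le_trans h3m hlow
      omega
  · rintro rfl
    refine ⟨{m, m}, by simp, ?_, by simp⟩
    intro u hu
    simp only [Multiset.insert_eq_cons, Multiset.mem_cons, Multiset.mem_singleton] at hu
    rcases hu with rfl | rfl <;> exact hatom

/-! ### The monoid `A = {0} ∪ [2,∞)` -/

def A : AddSubmonoid ℕ where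
  carrier := {x | x = 0 ∨ 2 ≤ x}
  zero_mem' := Or.inl rfl
  add_mem' := by
    rintro x y hx hy
    simp only [Set.mem_setOf_eq] at *
    omega

lemma mem_A {x : ℕ} : x ∈ A ↔ (x = 0 ∨ 2 ≤ x) := Iff.rfl

lemma A_num : IsNumericalMonoid A := by
  apply Set.Finite.subset (Set.finite_Iio 2)
  intro x hx
  simp only [Set.mem_compl_iff, SetLike.mem_coe, mem_A, Set.mem_Iio] at hx ⊢
  omega

lemma A_ne_top : A ≠ ⊤ := by
  intro h
  have h1 : (1 : ℕ) ∈ A := h.symm ▸ AddSubmonoid.mem_top 1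
  rw [mem_A] at h1
  omega

lemma atom_A {u : ℕ} : IsAtomOf A u ↔ u = 2 ∨ u = 3 := by
  constructor
  · rintro ⟨hu, hu0, hmin⟩
    rw [mem_A] at hu
    by_contra h
    push_neg at h
    exact hmin 2 (u - 2) (by rw [mem_A]; omega) (by rw [mem_A]; omega) (by omega) (by omega)
      (by omega)
  · rintro (rfl | rfl) <;>
      exact ⟨by rw [mem_A]; omega, by omega,
        fun x y hx hy hx0 hy0 => by rw [mem_A] at hx hy; omega⟩

lemma lenA {a k : ℕ} :
    k ∈ lengthSet A a ↔ ((k = 0 ∧ a = 0) ∨ (1 ≤ k ∧ 2 * k ≤ a ∧ a ≤ 3 * k)) := by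
  constructor
  · intro hk
    have hlow : k * 2 ≤ a := le_len (fun u hu => by rcases atom_A.mp hu with rfl | rfl <;> omega) hk
    have hhigh : a ≤ k * 3 := len_le (fun u hu => by rcases atom_A.mp hu with rfl | rfl <;> omega) hk
    omega
  · rintro (⟨rfl, rfl⟩ | ⟨hk, h1, h2⟩)
    · exact ⟨0, rfl, by simp, rfl⟩
    · refine ⟨Multiset.replicate (3 * k - a) 2 + Multiset.replicate (a - 2 * k) 3, ?_, ?_, ?_⟩
      · rw [Multiset.card_add, Multiset.card_replicate, Multiset.card_replicate]; omega
      · intro u hu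
        rw [Multiset.mem_add] at hu
        rcases hu with hu | hu <;> rw [Multiset.eq_of_mem_replicate hu] <;>
          exact atom_A.mpr (by omega)
      · rw [Multiset.sum_add, Multiset.sum_replicate, Multiset.sum_replicate,
          smul_eq_mul, smul_eq_mul]
        omega

/-! ### The monoid `B n = ⟨n, n+1⟩` -/

def B (n : ℕ) : AddSubmonoid ℕ where
  carrier := {x | ∃ k d : ℕ, d ≤ k ∧ x = k * n + d}
  zero_mem' := ⟨0, 0, le_refl 0, by ring⟩
  add_mem' := by
    rintro x y ⟨k1, d1, h1, rfl⟩ ⟨k2, d2, h2, rfl⟩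
    exact ⟨k1 + k2, d1 + d2, by omega, by ring⟩

lemma mem_B {n x : ℕ} : x ∈ B n ↔ ∃ k d : ℕ, d ≤ k ∧ x = k * n + d := Iff.rfl

lemma B_num {n : ℕ} (hn : 2 ≤ n) : IsNumericalMonoid (B n) := by
  apply Set.Finite.subset (Set.finite_Iio (n * n))
  intro x hx
  simp only [Set.mem_compl_iff, SetLike.mem_coe, Set.mem_Iio] at hx ⊢
  by_contra hlt
  push_neg at hlt
  apply hx
  rw [mem_B]
  refine ⟨x / n, x % n, ?_, ?_⟩
  · have h1 : x % n < n := Nat.mod_lt x (by omega)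
    have h2 : n ≤ x / n := (Nat.le_div_iff_mul_le (by omega)).mpr hlt
    omega
  · have h := Nat.div_add_mod x n
    rw [mul_comm]
    omega

lemma B_ne_top {n : ℕ} (hn : 2 ≤ n) : B n ≠ ⊤ := by
  intro h
  have h1 : (1 : ℕ) ∈ B n := h.symm ▸ AddSubmonoid.mem_top 1
  obtain ⟨k, d, hd, heq⟩ := mem_B.mp h1
  rcases k with _ | k
  · omega
  · have h2 : n ≤ (k + 1) * n := Nat.le_mul_of_pos_left n (by omega)
    linarith

lemma B_pos_ge {n x : ℕ} (hx : x ∈ B n) (hx0 : x ≠ 0) : n ≤ x := by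
  obtain ⟨k, d, hd, rfl⟩ := mem_B.mp hx
  rcases k with _ | k
  · omega
  · have h2 : n ≤ (k + 1) * n := Nat.le_mul_of_pos_left n (by omega)
    linarith

lemma B_atom_le {n u : ℕ} (hn : 2 ≤ n) (hu : IsAtomOf (B n) u) : u ≤ n + 1 := by
  obtain ⟨hmem, hu0, hmin⟩ := hu
  obtain ⟨k, d, hd, rfl⟩ := mem_B.mp hmem
  rcases Nat.lt_or_ge k 2 with h2 | h2
  · interval_cases k
    · omega
    · omega
  · exfalso
    obtain ⟨c, rfl⟩ : ∃ c, k = c + 2 := ⟨k - 2, by omega⟩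
    rcases Nat.lt_or_ge d (c + 2) with hdk | hdk
    · -- d < k : u = n + ((c+1)*n + d)
      refine hmin n ((c + 1) * n + d) ⟨1, 0, by omega, by ring⟩ ⟨c + 1, d, by omega, rfl⟩
        (by omega) ?_ (by ring)
      intro h
      rw [Nat.add_eq_zero] at h
      rcases Nat.mul_eq_zero.mp h.1 with h' | h' <;> omega
    · -- d = k : u = (n+1) + ((c+1)*n + (c+1))
      have hdk' : d = c + 2 := by omega
      subst hdk'
      refine hmin (n + 1) ((c + 1) * n + (c + 1)) ⟨1, 1, by omega, by ring⟩
        ⟨c + 1, c + 1, le_refl _, rfl⟩ (by omega) ?_ (by ring)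
      intro h
      rw [Nat.add_eq_zero] at h
      omega

lemma B_no_two {n j b : ℕ} (hn : 2 ≤ n) (hjn : j < n)
    (h1 : j ∈ lengthSet (B n) b) (h2 : j + 1 ∈ lengthSet (B n) b) : False := by
  have hup : b ≤ j * (n + 1) := len_le (fun u hu => B_atom_le hn hu) h1
  have hdown : (j + 1) * n ≤ b := le_len (fun u hu => B_pos_ge hu.1 hu.2.1) h2
  have e1 : j * (n + 1) = j * n + j := by ring
  have e2 : (j + 1) * n = j * n + n := by ring
  linarith

/-! ### The monoid `X = {0, 6} ∪ [9,∞)`, which has no set of lengths equal to `{3}` -/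

def X : AddSubmonoid ℕ where
  carrier := {x | x = 0 ∨ x = 6 ∨ 9 ≤ x}
  zero_mem' := Or.inl rfl
  add_mem' := by
    rintro x y hx hy
    simp only [Set.mem_setOf_eq] at *
    omega

lemma mem_X {x : ℕ} : x ∈ X ↔ (x = 0 ∨ x = 6 ∨ 9 ≤ x) := Iff.rfl

lemma X_num : IsNumericalMonoid X := by
  apply Set.Finite.subset (Set.finite_Iio 9)
  intro x hx
  simp only [Set.mem_compl_iff, SetLike.mem_coe, mem_X, Set.mem_Iio] at hx ⊢
  omega

lemma X_ne_top : X ≠ ⊤ := by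
  intro h
  have h1 : (1 : ℕ) ∈ X := h.symm ▸ AddSubmonoid.mem_top 1
  rw [mem_X] at h1
  omega

lemma atom_X {u : ℕ} :
    IsAtomOf X u ↔ (u = 6 ∨ u = 9 ∨ u = 10 ∨ u = 11 ∨ u = 13 ∨ u = 14) := by
  constructor
  · rintro ⟨hu, hu0, hmin⟩
    rw [mem_X] at hu
    by_contra h
    push_neg at h
    rcases (show u = 12 ∨ (15 ≤ u ∧ u ≤ 17) ∨ 18 ≤ u by omega) with h' | h' | h'
    · exact hmin 6 6 (by rw [mem_X]; omega) (by rw [mem_X]; omega) (by omega) (by omega)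
        (by omega)
    · exact hmin 6 (u - 6) (by rw [mem_X]; omega) (by rw [mem_X]; omega) (by omega) (by omega)
        (by omega)
    · exact hmin 9 (u - 9) (by rw [mem_X]; omega) (by rw [mem_X]; omega) (by omega) (by omega)
        (by omega)
  · rintro (rfl | rfl | rfl | rfl | rfl | rfl) <;>
      exact ⟨by rw [mem_X]; omega, by omega,
        fun x y hx hy hx0 hy0 => by rw [mem_X] at hx hy; omega⟩

lemma aX6 : IsAtomOf X 6 := atom_X.mpr (by omega)
lemma aX9 : IsAtomOf X 9 := atom_X.mpr (by omega)
lemma aX10 : IsAtomOf X 10 := atom_X.mpr (by omega)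
lemma aX11 : IsAtomOf X 11 := atom_X.mpr (by omega)
lemma aX13 : IsAtomOf X 13 := atom_X.mpr (by omega)
lemma aX14 : IsAtomOf X 14 := atom_X.mpr (by omega)

lemma X_no_three (a : ℕ) (hL : lengthSet X a = {3}) : False := by
  have h3 : 3 ∈ lengthSet X a := by rw [hL]; exact rfl
  obtain ⟨s, hcard, hs, hsum⟩ := h3
  obtain ⟨u, v, w, rfl⟩ := Multiset.card_eq_three.mp hcard
  have hu := atom_X.mp (hs u (by simp))
  have hv := atom_X.mp (hs v (by simp))
  have hw := atom_X.mp (hs w (by simp))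
  simp only [Multiset.insert_eq_cons, Multiset.sum_cons, Multiset.sum_singleton] at hsum
  have contra : ∀ k : ℕ, k ∈ lengthSet X a → k = 3 := fun k hk => by rw [hL] at hk; exact hk
  have ha : a = 18 ∨ a = 21 ∨ a = 22 ∨ a = 23 ∨ a = 24 ∨ a = 25 ∨ a = 26 ∨ a = 27 ∨
      a = 28 ∨ a = 29 ∨ a = 30 ∨ a = 31 ∨ a = 32 ∨ a = 33 ∨ a = 34 ∨ a = 35 ∨ a = 36 ∨
      a = 37 ∨ a = 38 ∨ a = 39 ∨ a = 40 ∨ a = 41 ∨ a = 42 := by omega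
  rcases ha with rfl|rfl|rfl|rfl|rfl|rfl|rfl|rfl|rfl|rfl|rfl|rfl|rfl|rfl|rfl|rfl|rfl|rfl|rfl|rfl|rfl|rfl|rfl
  · exact absurd (contra 2 (pair_mem aX9 aX9 (by norm_num))) (by norm_num)
  · exact absurd (contra 2 (pair_mem aX10 aX11 (by norm_num))) (by norm_num)
  · exact absurd (contra 2 (pair_mem aX11 aX11 (by norm_num))) (by norm_num)
  · exact absurd (contra 2 (pair_mem aX9 aX14 (by norm_num))) (by norm_num)
  · exact absurd (contra 2 (pair_mem aX10 aX14 (by norm_num))) (by norm_num)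
  · exact absurd (contra 2 (pair_mem aX11 aX14 (by norm_num))) (by norm_num)
  · exact absurd (contra 2 (pair_mem aX13 aX13 (by norm_num))) (by norm_num)
  · exact absurd (contra 2 (pair_mem aX13 aX14 (by norm_num))) (by norm_num)
  · exact absurd (contra 2 (pair_mem aX14 aX14 (by norm_num))) (by norm_num)
  · exact absurd (contra 4 (quad_mem aX6 aX6 aX6 aX11 (by norm_num))) (by norm_num)
  · exact absurd (contra 4 (quad_mem aX6 aX6 aX9 aX9 (by norm_num))) (by norm_num)
  · exact absurd (contra 4 (quad_mem aX6 aX6 aX6 aX13 (by norm_num))) (by norm_num)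
  · exact absurd (contra 4 (quad_mem aX6 aX6 aX6 aX14 (by norm_num))) (by norm_num)
  · exact absurd (contra 4 (quad_mem aX6 aX9 aX9 aX9 (by norm_num))) (by norm_num)
  · exact absurd (contra 4 (quad_mem aX6 aX6 aX9 aX13 (by norm_num))) (by norm_num)
  · exact absurd (contra 4 (quad_mem aX6 aX6 aX9 aX14 (by norm_num))) (by norm_num)
  · exact absurd (contra 4 (quad_mem aX9 aX9 aX9 aX9 (by norm_num))) (by norm_num)
  · exact absurd (contra 4 (quad_mem aX9 aX9 aX9 aX10 (by norm_num))) (by norm_num)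
  · exact absurd (contra 4 (quad_mem aX9 aX9 aX9 aX11 (by norm_num))) (by norm_num)
  · exact absurd (contra 4 (quad_mem aX9 aX10 aX10 aX10 (by norm_num))) (by norm_num)
  · exact absurd (contra 4 (quad_mem aX10 aX10 aX10 aX10 (by norm_num))) (by norm_num)
  · exact absurd (contra 4 (quad_mem aX9 aX9 aX9 aX14 (by norm_num))) (by norm_num)
  · exact absurd (contra 4 (quad_mem aX9 aX9 aX10 aX14 (by norm_num))) (by norm_num)

end AuxNM

open AuxNM in
theorem stmt_0 :
    (⋂ H ∈ {H : AddSubmonoid ℕ | IsNumericalMonoid H ∧ H ≠ ⊤}, systemOfLengths H)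
      = {({0} : Set ℕ), {1}, {2}} := by
  ext L
  rw [Set.mem_iInter₂]
  constructor
  · intro hL
    obtain ⟨a, haA, hLa⟩ := hL A ⟨A_num, A_ne_top⟩
    rw [mem_A] at haA
    simp only [Set.mem_insert_iff, Set.mem_singleton_iff]
    rcases (show a = 0 ∨ a = 2 ∨ a = 3 ∨ a = 4 ∨ a = 5 ∨ a = 7 ∨ (a = 6 ∨ 8 ≤ a) by omega)
      with rfl | rfl | rfl | rfl | rfl | rfl | hbig
    · left
      rw [hLa]
      ext k
      rw [lenA, Set.mem_singleton_iff]
      omega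
    · right; left
      rw [hLa]; ext k; rw [lenA, Set.mem_singleton_iff]; omega
    · right; left
      rw [hLa]; ext k; rw [lenA, Set.mem_singleton_iff]; omega
    · right; right
      rw [hLa]; ext k; rw [lenA, Set.mem_singleton_iff]; omega
    · right; right
      rw [hLa]; ext k; rw [lenA, Set.mem_singleton_iff]; omega
    · -- a = 7 : L = {3}, contradiction with X
      exfalso
      have hL3 : L = {3} := by
        rw [hLa]; ext k; rw [lenA, Set.mem_singleton_iff]; omega
      obtain ⟨b, hbX, hLb⟩ := hL X ⟨X_num, X_ne_top⟩
      rw [hLb] at hL3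
      exact X_no_three b hL3
    · -- a = 6 or a ≥ 8 : L contains j and j+1 with j ≥ 1, contradiction with B (j+2)
      exfalso
      set j := (a + 2) / 3 with hj
      have hcond : 1 ≤ j ∧ 2 * j + 2 ≤ a ∧ a ≤ 3 * j := by omega
      have hjL : j ∈ L := by
        rw [hLa]; exact lenA.mpr (Or.inr (by omega))
      have hjL1 : j + 1 ∈ L := by
        rw [hLa]; exact lenA.mpr (Or.inr (by omega))
      obtain ⟨b, hbB, hLb⟩ := hL (B (j + 2)) ⟨B_num (by omega), B_ne_top (by omega)⟩
      rw [hLb] at hjL hjL1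
      exact B_no_two (by omega) (by omega) hjL hjL1
  · intro h H hH
    obtain ⟨hnum, hne⟩ := hH
    have hinf : (H : Set ℕ).Infinite := by
      have := Set.Finite.infinite_compl hnum
      rwa [compl_compl] at this
    classical
    have hex : ∃ x, x ∈ H ∧ x ≠ 0 := by
      obtain ⟨x, hx⟩ := (hinf.diff (Set.finite_singleton 0)).nonempty
      exact ⟨x, hx.1, by simpa using hx.2⟩
    set m := Nat.find hex with hmdef
    obtain ⟨hmH, hm0⟩ := Nat.find_spec hex
    have hmin : ∀ x, x ∈ H → x ≠ 0 → m ≤ x := fun x hx hx0 => Nat.find_min' hex ⟨hx, hx0⟩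
    simp only [Set.mem_insert_iff, Set.mem_singleton_iff] at h
    rcases h with rfl | rfl | rfl
    · exact ⟨0, zero_mem H, (len_zero H).symm⟩
    · exact ⟨m, hmH, (len_one hmH hm0 hmin).symm⟩
    · exact ⟨m + m, add_mem hmH hmH, (len_two hmH hm0 hmin).symm⟩
end

section
/- For every integer t ≥ 6, the intersection of the systems of sets of lengths 𝓛(H), taken over all numerical monoids H having exactly t atoms, equals { {0}, {1}, {2} }. -/
-- general lemmas
lemma lengthSet_zero (H : AddSubmonoid ℕ) : lengthSet H 0 = {0} := by
  ext k
  constructor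
  · rintro ⟨s, hcard, hat, hsum⟩
    have : s = 0 := by
      rcases Multiset.empty_or_exists_mem s with h | ⟨u, hu⟩
      · exact h
      · exfalso
        have h0 : u = 0 := by
          have := Multiset.single_le_sum (fun x _ => Nat.zero_le x) u hu
          omega
        exact (hat u hu).2.1 h0
    simp [this] at hcard
    simpa using hcard.symm
  · rintro rfl
    exact ⟨0, by simp, by simp, by simp⟩

lemma mem_lengthSet_add {H : AddSubmonoid ℕ} {x y kx ky : ℕ}
    (hx : kx ∈ lengthSet H x) (hy : ky ∈ lengthSet H y) :
    kx + ky ∈ lengthSet H (x + y) := by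
  obtain ⟨s, hs1, hs2, hs3⟩ := hx
  obtain ⟨r, hr1, hr2, hr3⟩ := hy
  refine ⟨s + r, by simp [hs1, hr1], ?_, by simp [hs3, hr3]⟩
  intro u hu
  rcases Multiset.mem_add.1 hu with h | h
  · exact hs2 u h
  · exact hr2 u h

lemma lengthSet_nonempty (H : AddSubmonoid ℕ) : ∀ a, a ∈ H → (lengthSet H a).Nonempty := by
  intro a
  induction a using Nat.strong_induction_on with
  | _ a ih =>
    intro ha
    rcases Nat.eq_zero_or_pos a with rfl | hpos
    · exact ⟨0, by rw [lengthSet_zero]; rfl⟩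
    by_cases hat : IsAtomOf H a
    · exact ⟨1, {a}, by simp, by simpa using hat, by simp⟩
    · simp only [IsAtomOf, not_and, not_forall] at hat
      obtain ⟨x, y, hx, hy, hx0, hy0, hxy⟩ := hat ha (by omega)
      push_neg at hxy
      have hxa : x < a := by omega
      have hya : y < a := by omega
      obtain ⟨kx, hkx⟩ := ih x hxa hx
      obtain ⟨ky, hky⟩ := ih y hya hy
      exact ⟨kx + ky, hxy ▸ mem_lengthSet_add hkx hky⟩

lemma sum_le_card_mul {s : Multiset ℕ} {M : ℕ} (h : ∀ u ∈ s, u ≤ M) :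
    s.sum ≤ Multiset.card s * M := by
  induction s using Multiset.induction with
  | empty => simp
  | cons a s ih =>
    simp only [Multiset.sum_cons, Multiset.card_cons]
    have := ih (fun u hu => h u (Multiset.mem_cons_of_mem hu))
    have := h a (Multiset.mem_cons_self a s)
    calc a + s.sum ≤ M + Multiset.card s * M := by omega
    _ = (Multiset.card s + 1) * M := by ring

lemma card_mul_le_sum {s : Multiset ℕ} {m : ℕ} (h : ∀ u ∈ s, m ≤ u) :
    Multiset.card s * m ≤ s.sum := by
  induction s using Multiset.induction with
  | empty => simp
  | cons a s ih =>
    simp only [Multiset.sum_cons, Multiset.card_cons]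
    have := ih (fun u hu => h u (Multiset.mem_cons_of_mem hu))
    have := h a (Multiset.mem_cons_self a s)
    calc (Multiset.card s + 1) * m = m + Multiset.card s * m := by ring
    _ ≤ a + s.sum := by omega

lemma singleton_zero_mem (H : AddSubmonoid ℕ) : ({0} : Set ℕ) ∈ systemOfLengths H :=
  ⟨0, H.zero_mem, (lengthSet_zero H).symm⟩

lemma singleton_one_mem (H : AddSubmonoid ℕ) (hne : (atomSet H).Nonempty) :
    ({1} : Set ℕ) ∈ systemOfLengths H := by
  set m := sInf (atomSet H) with hm
  have hmem : m ∈ atomSet H := Nat.sInf_mem hne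
  have hmin : ∀ u, IsAtomOf H u → m ≤ u := fun u hu => Nat.sInf_le hu
  refine ⟨m, hmem.1, ?_⟩
  ext k
  simp only [Set.mem_singleton_iff]
  constructor
  · rintro rfl
    exact ⟨{m}, by simp, by simp; exact hmem, by simp⟩
  · rintro ⟨s, hcard, hat, hsum⟩
    have hb := card_mul_le_sum (fun u hu => hmin u (hat u hu))
    rw [hsum, hcard] at hb
    have hm0 : m ≠ 0 := hmem.2.1
    rcases Nat.lt_or_ge k 2 with hk | hk
    · interval_cases k
      · exfalso
        have : s = 0 := Multiset.card_eq_zero.1 hcard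
        simp [this] at hsum
        exact hm0 hsum.symm
      · rfl
    · exfalso
      have : 2 * m ≤ k * m := Nat.mul_le_mul_right m hk
      omega
lemma singleton_two_mem (H : AddSubmonoid ℕ) (hne : (atomSet H).Nonempty) :
    ({2} : Set ℕ) ∈ systemOfLengths H := by
  set m := sInf (atomSet H) with hm
  have hmem : m ∈ atomSet H := Nat.sInf_mem hne
  have hmin : ∀ u, IsAtomOf H u → m ≤ u := fun u hu => Nat.sInf_le hu
  have hm0 : m ≠ 0 := hmem.2.1
  refine ⟨m + m, H.add_mem hmem.1 hmem.1, ?_⟩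
  ext k
  simp only [Set.mem_singleton_iff]
  constructor
  · rintro rfl
    refine ⟨{m, m}, by simp, ?_, by simp⟩
    intro u hu
    rcases Multiset.mem_cons.1 hu with rfl | hu
    · exact hmem
    · rw [Multiset.mem_singleton.1 hu]; exact hmem
  · rintro ⟨s, hcard, hat, hsum⟩
    have hb := card_mul_le_sum (fun u hu => hmin u (hat u hu))
    rw [hsum, hcard] at hb
    rcases Nat.lt_or_ge k 3 with hk | hk
    · interval_cases k
      · exfalso
        have : s = 0 := Multiset.card_eq_zero.1 hcard
        simp [this] at hsum
        omega
      · exfalso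
        obtain ⟨u, rfl⟩ := Multiset.card_eq_one.1 hcard
        have hu := hat u (by simp)
        simp at hsum
        exact hu.2.2 m m hmem.1 hmem.1 hm0 hm0 hsum
      · rfl
    · exfalso
      have : 3 * m ≤ k * m := Nat.mul_le_mul_right m hk
      omega

/-- `H1 t = {0} ∪ [t, ∞)`. -/
def H1 (t : ℕ) : AddSubmonoid ℕ where
  carrier := {n | n = 0 ∨ t ≤ n}
  zero_mem' := by left; rfl
  add_mem' := by intro a b ha hb; simp only [Set.mem_setOf_eq] at *; omega

lemma mem_H1 {t n : ℕ} : n ∈ H1 t ↔ (n = 0 ∨ t ≤ n) := Iff.rfl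

lemma H1_numerical (t : ℕ) : IsNumericalMonoid (H1 t) := by
  apply Set.Finite.subset (Set.finite_Iio t)
  intro n hn
  simp only [Set.mem_compl_iff, SetLike.mem_coe, mem_H1] at hn
  simp only [Set.mem_Iio]; omega

lemma isAtom_H1 {t u : ℕ} (ht : 1 ≤ t) : IsAtomOf (H1 t) u ↔ (t ≤ u ∧ u ≤ 2*t - 1) := by
  constructor
  · rintro ⟨hu, hu0, hdec⟩
    rw [mem_H1] at hu
    have h1 : t ≤ u := by omega
    by_contra h
    push_neg at h
    have h2 : 2*t ≤ u := by omega
    exact hdec t (u - t) (by rw [mem_H1]; omega) (by rw [mem_H1]; omega)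
      (by omega) (by omega) (by omega)
  · rintro ⟨h1, h2⟩
    refine ⟨by rw [mem_H1]; omega, by omega, ?_⟩
    intro x y hx hy hx0 hy0
    rw [mem_H1] at hx hy
    omega

lemma atomSet_H1 (t : ℕ) (ht : 1 ≤ t) : atomSet (H1 t) = Set.Icc t (2*t - 1) := by
  ext u
  simp only [atomSet, Set.mem_setOf_eq, isAtom_H1 ht, Set.mem_Icc]

lemma ncard_atomSet_H1 (t : ℕ) (ht : 1 ≤ t) : (atomSet (H1 t)).ncard = t := by
  rw [atomSet_H1 t ht]
  rw [Set.ncard_eq_toFinset_card']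
  simp [Nat.card_Icc]
  omega

-- characterization of length sets of H1
lemma mem_lengthSet_H1 {t b k : ℕ} (ht : 1 ≤ t) :
    k ∈ lengthSet (H1 t) b ↔ (k * t ≤ b ∧ b ≤ k * (2*t - 1)) := by
  constructor
  · rintro ⟨s, hcard, hat, hsum⟩
    subst hcard hsum
    constructor
    · exact card_mul_le_sum (fun u hu => ((isAtom_H1 ht).1 (hat u hu)).1)
    · exact sum_le_card_mul (fun u hu => ((isAtom_H1 ht).1 (hat u hu)).2)
  · intro h
    induction k generalizing b with
    | zero =>
      simp only [Nat.zero_mul] at h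
      have : b = 0 := by omega
      exact ⟨0, by simp, by simp, by simp [this]⟩
    | succ k ih =>
      -- choose u = max t (b - k*(2t-1))
      set u := max t (b - k*(2*t-1)) with hu
      have hmul1 : k * t ≤ k * (2*t-1) := Nat.mul_le_mul_left k (by omega)
      have hs1 : (k+1) * t = k * t + t := by ring
      have hs2 : (k+1) * (2*t-1) = k * (2*t-1) + (2*t-1) := by ring
      have hut : t ≤ u := le_max_left _ _
      have hu2 : u ≤ 2*t - 1 := by
        rw [hu]; apply max_le (by omega); omega
      have hrange : k * t ≤ b - u ∧ b - u ≤ k * (2*t-1) := by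
        rcases max_cases t (b - k*(2*t-1)) with ⟨h1, h2⟩ | ⟨h1, h2⟩ <;> omega
      obtain ⟨s, hcard, hat, hsum⟩ := ih hrange
      refine ⟨u ::ₘ s, by simp [hcard], ?_, by simp [hsum]; omega⟩
      intro v hv
      rcases Multiset.mem_cons.1 hv with rfl | hv
      · exact (isAtom_H1 ht).2 ⟨hut, hu2⟩
      · exact hat v hv

/-- `H2 t`: odd numbers in `[2t-1, 4t-3]`, even numbers `≥ 4t-2`, odd numbers `≥ 6t-3`. -/
def H2 (t : ℕ) (ht : 6 ≤ t) : AddSubmonoid ℕ where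
  carrier := {n | n = 0 ∨ (¬ 2 ∣ n ∧ ((2*t-1 ≤ n ∧ n ≤ 4*t-3) ∨ 6*t-3 ≤ n)) ∨ (2 ∣ n ∧ 4*t-2 ≤ n)}
  zero_mem' := by left; rfl
  add_mem' := by intro a b ha hb; simp only [Set.mem_setOf_eq] at *; omega

lemma mem_H2 {t n : ℕ} (ht : 6 ≤ t) : n ∈ H2 t ht ↔
    (n = 0 ∨ (¬ 2 ∣ n ∧ ((2*t-1 ≤ n ∧ n ≤ 4*t-3) ∨ 6*t-3 ≤ n)) ∨ (2 ∣ n ∧ 4*t-2 ≤ n)) :=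
  Iff.rfl

lemma H2_numerical (t : ℕ) (ht : 6 ≤ t) : IsNumericalMonoid (H2 t ht) := by
  apply Set.Finite.subset (Set.finite_Iio (6*t))
  intro n hn
  simp only [Set.mem_compl_iff, SetLike.mem_coe, mem_H2 ht] at hn
  simp only [Set.mem_Iio]; omega

lemma isAtom_H2 {t u : ℕ} (ht : 6 ≤ t) :
    IsAtomOf (H2 t ht) u ↔ (¬ 2 ∣ u ∧ 2*t-1 ≤ u ∧ u ≤ 4*t-3) := by
  constructor
  · rintro ⟨hu, hu0, hdec⟩
    rw [mem_H2 ht] at hu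
    by_contra hc
    -- in all remaining cases u decomposes
    have key : ∃ x y : ℕ, (x ∈ H2 t ht) ∧ (y ∈ H2 t ht) ∧ x ≠ 0 ∧ y ≠ 0 ∧ u = x + y := by
      rcases hu with rfl | ⟨hodd, hb⟩ | ⟨heven, hb⟩
      · omega
      · -- odd: must be in the tail ≥ 6t-3 (else hc contradiction)
        have htail : 6*t-3 ≤ u := by omega
        exact ⟨2*t-1, u - (2*t-1), by rw [mem_H2 ht]; omega, by rw [mem_H2 ht]; omega,
          by omega, by omega, by omega⟩
      · -- even ≥ 4t-2
        rcases Nat.lt_or_ge u (6*t-3) with h1 | h1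
        · exact ⟨2*t-1, u - (2*t-1), by rw [mem_H2 ht]; omega, by rw [mem_H2 ht]; omega,
            by omega, by omega, by omega⟩
        rcases Nat.lt_or_ge u (8*t-5) with h2 | h2
        · exact ⟨u - (4*t-3), 4*t-3, by rw [mem_H2 ht]; omega, by rw [mem_H2 ht]; omega,
            by omega, by omega, by omega⟩
        · exact ⟨2*t-1, u - (2*t-1), by rw [mem_H2 ht]; omega, by rw [mem_H2 ht]; omega,
            by omega, by omega, by omega⟩
    obtain ⟨x, y, hx, hy, hx0, hy0, hxy⟩ := key
    exact hdec x y hx hy hx0 hy0 hxy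
  · rintro ⟨hodd, h1, h2⟩
    refine ⟨by rw [mem_H2 ht]; omega, by omega, ?_⟩
    intro x y hx hy hx0 hy0
    rw [mem_H2 ht] at hx hy
    omega

lemma atomSet_H2 (t : ℕ) (ht : 6 ≤ t) :
    atomSet (H2 t ht) = {u | ¬ 2 ∣ u ∧ 2*t-1 ≤ u ∧ u ≤ 4*t-3} := by
  ext u
  simp only [atomSet, Set.mem_setOf_eq, isAtom_H2 ht]

lemma ncard_atomSet_H2 (t : ℕ) (ht : 6 ≤ t) : (atomSet (H2 t ht)).ncard = t := by
  rw [atomSet_H2 t ht]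
  have : {u | ¬ 2 ∣ u ∧ 2*t-1 ≤ u ∧ u ≤ 4*t-3} =
      ↑((Finset.range t).image (fun i => 2*i + (2*t-1))) := by
    ext u
    simp only [Set.mem_setOf_eq, Finset.coe_image, Set.mem_image, Finset.mem_coe,
      Finset.mem_range]
    constructor
    · rintro ⟨h1, h2, h3⟩
      exact ⟨(u - (2*t-1))/2, by omega, by omega⟩
    · rintro ⟨i, hi, rfl⟩
      omega
  rw [this, Set.ncard_coe_finset, Finset.card_image_of_injective _ (by intro a b h; simp only [] at h; omega),
    Finset.card_range]

lemma odd_sum_parity {s : Multiset ℕ} (h : ∀ u ∈ s, ¬ 2 ∣ u) :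
    2 ∣ s.sum + Multiset.card s := by
  induction s using Multiset.induction with
  | empty => simp
  | cons a s ih =>
    simp only [Multiset.sum_cons, Multiset.card_cons]
    have h1 := ih (fun u hu => h u (Multiset.mem_cons_of_mem hu))
    have h2 := h a (Multiset.mem_cons_self a s)
    omega

lemma parity_lengthSet_H2 {t a k k' : ℕ} (ht : 6 ≤ t)
    (hk : k ∈ lengthSet (H2 t ht) a) (hk' : k' ∈ lengthSet (H2 t ht) a) :
    k % 2 = k' % 2 := by
  obtain ⟨s, rfl, hat, rfl⟩ := hk
  obtain ⟨r, hcard, hat', hsum⟩ := hk'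
  have h1 := odd_sum_parity (fun u hu => ((isAtom_H2 ht).1 (hat u hu)).1)
  have h2 := odd_sum_parity (fun u hu => ((isAtom_H2 ht).1 (hat' u hu)).1)
  omega

/-- `H3 t = {0} ∪ {t} ∪ [t+3, ∞)`. -/
def H3 (t : ℕ) (ht : 6 ≤ t) : AddSubmonoid ℕ where
  carrier := {n | n = 0 ∨ n = t ∨ t+3 ≤ n}
  zero_mem' := by left; rfl
  add_mem' := by intro a b ha hb; simp only [Set.mem_setOf_eq] at *; omega

lemma mem_H3 {t n : ℕ} (ht : 6 ≤ t) : n ∈ H3 t ht ↔ (n = 0 ∨ n = t ∨ t+3 ≤ n) := Iff.rfl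

lemma H3_numerical (t : ℕ) (ht : 6 ≤ t) : IsNumericalMonoid (H3 t ht) := by
  apply Set.Finite.subset (Set.finite_Iio (t+3))
  intro n hn
  simp only [Set.mem_compl_iff, SetLike.mem_coe, mem_H3 ht] at hn
  simp only [Set.mem_Iio]; omega

lemma isAtom_H3 {t u : ℕ} (ht : 6 ≤ t) :
    IsAtomOf (H3 t ht) u ↔ (u = t ∨ (t+3 ≤ u ∧ u ≤ 2*t+2 ∧ u ≠ 2*t)) := by
  constructor
  · rintro ⟨hu, hu0, hdec⟩
    rw [mem_H3 ht] at hu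
    by_contra hc
    have key : ∃ x y : ℕ, (x ∈ H3 t ht) ∧ (y ∈ H3 t ht) ∧ x ≠ 0 ∧ y ≠ 0 ∧ u = x + y := by
      rcases Nat.lt_or_ge u (2*t+3) with h1 | h1
      · -- then u = 2t (all other possibilities contradict hc/hu)
        have : u = 2*t := by omega
        exact ⟨t, t, by rw [mem_H3 ht]; omega, by rw [mem_H3 ht]; omega, by omega, by omega, by omega⟩
      · exact ⟨t, u - t, by rw [mem_H3 ht]; omega, by rw [mem_H3 ht]; omega, by omega, by omega,
          by omega⟩
    obtain ⟨x, y, hx, hy, hx0, hy0, hxy⟩ := key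
    exact hdec x y hx hy hx0 hy0 hxy
  · rintro h
    refine ⟨by rw [mem_H3 ht]; omega, by omega, ?_⟩
    intro x y hx hy hx0 hy0
    rw [mem_H3 ht] at hx hy
    omega

lemma ncard_atomSet_H3 (t : ℕ) (ht : 6 ≤ t) : (atomSet (H3 t ht)).ncard = t := by
  have : atomSet (H3 t ht) = ↑(insert t ((Finset.Icc (t+3) (2*t+2)).erase (2*t))) := by
    ext u
    simp only [atomSet, Set.mem_setOf_eq, isAtom_H3 ht, Finset.coe_insert, Set.mem_insert_iff,
      Finset.mem_coe, Finset.mem_erase, Finset.mem_Icc]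
    omega
  rw [this, Set.ncard_coe_finset, Finset.card_insert_of_notMem (by simp),
    Finset.card_erase_of_mem (by simp [Finset.mem_Icc]; omega), Nat.card_Icc]
  omega

lemma pair2_mem {H : AddSubmonoid ℕ} {a b n : ℕ} (ha : IsAtomOf H a) (hb : IsAtomOf H b)
    (hab : a + b = n) : 2 ∈ lengthSet H n := by
  refine ⟨{a, b}, by simp, ?_, by simp [hab]⟩
  intro u hu
  rcases Multiset.mem_cons.1 hu with rfl | hu
  · exact ha
  · rw [Multiset.mem_singleton.1 hu]; exact hb

lemma two_mem_H3 {t n : ℕ} (ht : 6 ≤ t) (h1 : 2*t+3 ≤ n) (h2 : n ≤ 4*t+4) :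
    2 ∈ lengthSet (H3 t ht) n := by
  have A : ∀ x, (x = t ∨ (t+3 ≤ x ∧ x ≤ 2*t+2 ∧ x ≠ 2*t)) → IsAtomOf (H3 t ht) x :=
    fun x hx => (isAtom_H3 ht).2 hx
  rcases eq_or_ne n (3*t) with rfl | h3t
  · exact pair2_mem (A (t+3) (by omega)) (A (2*t-3) (by omega)) (by omega)
  rcases eq_or_ne n (4*t+2) with rfl | h4t2
  · exact pair2_mem (A (2*t+1) (by omega)) (A (2*t+1) (by omega)) (by omega)
  rcases Nat.lt_or_ge n (3*t+3) with h | h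
  · exact pair2_mem (A t (by omega)) (A (n-t) (by omega)) (by omega)
  rcases eq_or_ne n (3*t+3) with rfl | h3t3
  · exact pair2_mem (A (t+4) (by omega)) (A (2*t-1) (by omega)) (by omega)
  rcases eq_or_ne n (3*t+4) with rfl | h3t4
  · exact pair2_mem (A (t+3) (by omega)) (A (2*t+1) (by omega)) (by omega)
  · exact pair2_mem (A (n-(2*t+2)) (by omega)) (A (2*t+2) (by omega)) (by omega)

lemma four_mem_H3 {t n : ℕ} (ht : 6 ≤ t) (h1 : 4*t+5 ≤ n) (h2 : n ≤ 6*t+6) :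
    4 ∈ lengthSet (H3 t ht) n := by
  have A : ∀ x, (x = t ∨ (t+3 ≤ x ∧ x ≤ 2*t+2 ∧ x ≠ 2*t)) → IsAtomOf (H3 t ht) x :=
    fun x hx => (isAtom_H3 ht).2 hx
  have quad : ∀ a b c d : ℕ, IsAtomOf (H3 t ht) a → IsAtomOf (H3 t ht) b → IsAtomOf (H3 t ht) c →
      IsAtomOf (H3 t ht) d → a + b + c + d = n → 4 ∈ lengthSet (H3 t ht) n := by
    intro a b c d ha hb hc hd habcd
    refine ⟨{a, b, c, d}, by simp, ?_, by simp; omega⟩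
    intro u hu
    simp only [Multiset.insert_eq_cons, Multiset.mem_cons, Multiset.mem_singleton] at hu
    rcases hu with rfl | rfl | rfl | rfl
    exacts [ha, hb, hc, hd]
  rcases eq_or_ne n (4*t+5) with rfl | c1
  · exact quad t t t (t+5) (A t (by omega)) (A t (by omega)) (A t (by omega))
      (A (t+5) (by omega)) (by omega)
  rcases eq_or_ne n (6*t+5) with rfl | c2
  · exact quad t (t+3) (2*t+1) (2*t+1) (A t (by omega)) (A (t+3) (by omega))
      (A (2*t+1) (by omega)) (A (2*t+1) (by omega)) (by omega)
  rcases eq_or_ne n (6*t+6) with rfl | c3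
  · exact quad t (t+4) (2*t+1) (2*t+1) (A t (by omega)) (A (t+4) (by omega))
      (A (2*t+1) (by omega)) (A (2*t+1) (by omega)) (by omega)
  · -- 4t+6 ≤ n ≤ 6t+4 : split as (t+t) + (n - 2t)
    have e1 : 2 ∈ lengthSet (H3 t ht) (t + t) := pair2_mem (A t (by omega)) (A t (by omega)) rfl
    have e2 : 2 ∈ lengthSet (H3 t ht) (n - 2*t) := two_mem_H3 ht (by omega) (by omega)
    have := mem_lengthSet_add e1 e2
    have heq : t + t + (n - 2*t) = n := by omega
    rw [heq] at this
    exact this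

lemma no_three_H3 {t : ℕ} (ht : 6 ≤ t) (c : ℕ) : lengthSet (H3 t ht) c ≠ {3} := by
  intro hL
  have h3 : 3 ∈ lengthSet (H3 t ht) c := by rw [hL]; rfl
  obtain ⟨s, hcard, hat, hsum⟩ := h3
  obtain ⟨u, v, w, rfl⟩ := Multiset.card_eq_three.1 hcard
  have hu := (isAtom_H3 ht).1 (hat u (by simp))
  have hv := (isAtom_H3 ht).1 (hat v (by simp))
  have hw := (isAtom_H3 ht).1 (hat w (by simp))
  have hc : u + (v + w) = c := by simpa using hsum
  -- c = 3t or 3t+3 ≤ c ≤ 6t+6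
  have hrange : c = 3*t ∨ (3*t+3 ≤ c ∧ c ≤ 6*t+6) := by omega
  have : (2 ∈ lengthSet (H3 t ht) c) ∨ (4 ∈ lengthSet (H3 t ht) c) := by
    rcases Nat.lt_or_ge c (4*t+5) with h | h
    · exact Or.inl (two_mem_H3 ht (by omega) (by omega))
    · exact Or.inr (four_mem_H3 ht (by omega) (by omega))
  rcases this with h | h <;> rw [hL] at h <;> simp at h

theorem stmt_1 (t : ℕ) (ht : 6 ≤ t) :
    (⋂ H ∈ {H : AddSubmonoid ℕ | IsNumericalMonoid H ∧ (atomSet H).ncard = t},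
        systemOfLengths H) = {({0} : Set ℕ), {1}, {2}} := by
  have ht1 : 1 ≤ t := by omega
  ext L
  simp only [Set.mem_iInter, Set.mem_setOf_eq, Set.mem_insert_iff, Set.mem_singleton_iff]
  constructor
  · intro h
    obtain ⟨b, hb, hL1⟩ := h (H1 t) ⟨H1_numerical t, ncard_atomSet_H1 t ht1⟩
    obtain ⟨a2, ha2, hL2⟩ := h (H2 t ht) ⟨H2_numerical t ht, ncard_atomSet_H2 t ht⟩
    obtain ⟨c, hc, hL3⟩ := h (H3 t ht) ⟨H3_numerical t ht, ncard_atomSet_H3 t ht⟩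
    obtain ⟨k₀, hk₀⟩ : L.Nonempty := hL1 ▸ lengthSet_nonempty (H1 t) b hb
    -- L is a singleton
    have hconv : ∀ k k' : ℕ, k ∈ L → k' ∈ L → k < k' → False := by
      intro k k' hk hk' hlt
      have hk1 : (k+1) ∈ L := by
        rw [hL1, mem_lengthSet_H1 ht1]
        have e1 := (mem_lengthSet_H1 ht1 (b := b) (k := k)).1 (hL1 ▸ hk)
        have e2 := (mem_lengthSet_H1 ht1 (b := b) (k := k')).1 (hL1 ▸ hk')
        constructor
        · calc (k+1)*t ≤ k'*t := Nat.mul_le_mul_right t (by omega)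
          _ ≤ b := e2.1
        · calc b ≤ k*(2*t-1) := e1.2
          _ ≤ (k+1)*(2*t-1) := Nat.mul_le_mul_right _ (by omega)
      have := parity_lengthSet_H2 ht (hL2 ▸ hk) (hL2 ▸ hk1)
      omega
    have hsingle : L = {k₀} := by
      apply Set.eq_singleton_iff_unique_mem.2 ⟨hk₀, ?_⟩
      intro k hk
      rcases lt_trichotomy k k₀ with h' | h' | h'
      · exact absurd (hconv k k₀ hk hk₀ h') (by simp)
      · exact h'
      · exact absurd (hconv k₀ k hk₀ hk h') (by simp)
    -- bound k₀ ≤ 3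
    have hk03 : k₀ ≤ 3 := by
      by_contra hge
      obtain ⟨j, rfl⟩ : ∃ j, k₀ = j + 4 := ⟨k₀ - 4, by omega⟩
      have hmem := (mem_lengthSet_H1 ht1).1 (hL1 ▸ hk₀)
      have hnot1 : (j+5) ∉ L := by rw [hsingle]; simp
      have hnot2 : (j+3) ∉ L := by rw [hsingle]; simp
      rw [hL1, mem_lengthSet_H1 ht1] at hnot1 hnot2
      push_neg at hnot1 hnot2
      set T := 2*t - 1 with hT
      have hT2 : T + 1 = 2*t := by omega
      set P := j*t with hP
      set Q := j*T with hQ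
      have hPQ : Q + j = 2*P := by
        have : j*(T+1) = 2*(j*t) := by rw [hT2]; ring
        rw [Nat.mul_add] at this; omega
      have hP6 : 6*j ≤ P := by
        have := Nat.mul_le_mul_left j ht
        omega
      have e1 : (j+4)*t = P + 4*t := by ring
      have e2 : (j+4)*T = Q + 4*T := by ring
      have e3 : (j+5)*t = P + 5*t := by ring
      have e4 : (j+5)*T = Q + 5*T := by ring
      have e5 : (j+3)*t = P + 3*t := by ring
      have e6 : (j+3)*T = Q + 3*T := by ring
      rw [e1, e2] at hmem
      rw [e3, e4] at hnot1
      rw [e5, e6] at hnot2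
      omega
    -- k₀ ≠ 3
    have hk0ne3 : k₀ ≠ 3 := by
      rintro rfl
      exact no_three_H3 ht c (by rw [← hL3, hsingle])
    interval_cases k₀
    · left; exact hsingle
    · right; left; exact hsingle
    · right; right; exact hsingle
    · omega
  · intro hL H ⟨hnum, hcard⟩
    have hne : (atomSet H).Nonempty := Set.nonempty_of_ncard_ne_zero (by omega)
    rcases hL with rfl | rfl | rfl
    · exact singleton_zero_mem H
    · exact singleton_one_mem H hne
    · exact singleton_two_mem H hne
end

section
/- For every integer m ≥ 2 and every integer k ≥ 4, there exists a numerical monoid H with exactly m atoms such that the singleton {k} is not an element of 𝓛(H). -/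
/-- The monoid `{0} ∪ [m, ∞)`. -/
def Hmon (m : ℕ) : AddSubmonoid ℕ where
  carrier := {n | n = 0 ∨ m ≤ n}
  zero_mem' := Or.inl rfl
  add_mem' := by
    rintro a b (rfl | ha) (rfl | hb) <;> simp <;> omega

lemma mem_Hmon {m n : ℕ} : n ∈ Hmon m ↔ n = 0 ∨ m ≤ n := Iff.rfl

lemma atom_Hmon_iff {m u : ℕ} (hm : 2 ≤ m) :
    IsAtomOf (Hmon m) u ↔ m ≤ u ∧ u < 2 * m := by
  constructor
  · rintro ⟨hu, hu0, hna⟩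
    rcases mem_Hmon.mp hu with rfl | hmu
    · exact absurd rfl hu0
    refine ⟨hmu, ?_⟩
    by_contra h
    push_neg at h
    exact hna m (u - m) (mem_Hmon.mpr (Or.inr le_rfl))
      (mem_Hmon.mpr (Or.inr (by omega))) (by omega) (by omega) (by omega)
  · rintro ⟨h1, h2⟩
    refine ⟨mem_Hmon.mpr (Or.inr h1), by omega, ?_⟩
    intro x y hx hy hx0 hy0
    rcases mem_Hmon.mp hx with rfl | hx' ; · exact absurd rfl hx0
    rcases mem_Hmon.mp hy with rfl | hy' ; · exact absurd rfl hy0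
    omega

/-- Any `a` with `k*m ≤ a ≤ k*(2m-1)` is a sum of `k` elements of `[m, 2m)`. -/
lemma exists_multiset (m : ℕ) (hm : 2 ≤ m) :
    ∀ (k a : ℕ), k * m ≤ a → a ≤ k * (2 * m - 1) →
      ∃ s : Multiset ℕ, Multiset.card s = k ∧ (∀ u ∈ s, m ≤ u ∧ u < 2 * m) ∧ s.sum = a := by
  intro k
  induction k with
  | zero =>
    intro a h1 h2
    refine ⟨0, rfl, by simp, ?_⟩
    simp only [Multiset.sum_zero]
    omega
  | succ n ih =>
    intro a h1 h2
    have key : ∃ u r, u + r = a ∧ m ≤ u ∧ u < 2 * m ∧ n * m ≤ r ∧ r ≤ n * (2 * m - 1) := by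
      rw [Nat.succ_mul] at h1 h2
      have e3 : n * (2 * m - 1) + n = n * m + n * m := by
        have h2m : (2 * m - 1) + 1 = 2 * m := by omega
        calc n * (2 * m - 1) + n = n * ((2 * m - 1) + 1) := by ring
          _ = n * (2 * m) := by rw [h2m]
          _ = n * m + n * m := by ring
      have hnA : n ≤ n * m := Nat.le_mul_of_pos_right n (by omega)
      set A := n * m with hA
      set B := n * (2 * m - 1) with hB
      rcases le_or_gt a (B + m) with hc | hc
      · exact ⟨m, a - m, by omega, le_rfl, by omega, by omega, by omega⟩
      · exact ⟨a - B, B, by omega, by omega, by omega, by omega, le_rfl⟩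
    obtain ⟨u, r, hur, hu1, hu2, hr1, hr2⟩ := key
    obtain ⟨s, hcard, hmem, hsum⟩ := ih r hr1 hr2
    refine ⟨u ::ₘ s, by simp [hcard], ?_, by simp [hsum, hur]⟩
    intro v hv
    rcases Multiset.mem_cons.mp hv with rfl | hv
    · exact ⟨hu1, hu2⟩
    · exact hmem v hv

theorem stmt_3 (m k : ℕ) (hm : 2 ≤ m) (hk : 4 ≤ k) :
    ∃ H : AddSubmonoid ℕ, IsNumericalMonoid H ∧ (atomSet H).ncard = m ∧
      ({k} : Set ℕ) ∉ systemOfLengths H := by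
  refine ⟨Hmon m, ?_, ?_, ?_⟩
  · -- numerical monoid
    apply Set.Finite.subset (Set.finite_Iio m)
    intro n hn
    simp only [Set.mem_compl_iff, SetLike.mem_coe, mem_Hmon] at hn
    push_neg at hn
    exact hn.2
  · -- atom count
    have : atomSet (Hmon m) = ↑(Finset.Ico m (2 * m)) := by
      ext u
      simp [atomSet, atom_Hmon_iff hm, Set.mem_setOf_eq]
    rw [this, Set.ncard_coe_finset, Nat.card_Ico]
    omega
  · -- {k} not a length set
    rintro ⟨a, ha, heq⟩
    have hkmem : k ∈ lengthSet (Hmon m) a := by rw [← heq]; rfl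
    obtain ⟨s, hcard, hatoms, hsum⟩ := hkmem
    -- bounds on a
    have hbmem : ∀ u ∈ s, m ≤ u ∧ u < 2 * m := fun u hu => (atom_Hmon_iff hm).mp (hatoms u hu)
    have hlow : k * m ≤ a := by
      have := Multiset.card_nsmul_le_sum (s := s) (fun u hu => (hbmem u hu).1)
      rw [hcard, smul_eq_mul, hsum] at this
      exact this
    have hhigh : a ≤ k * (2 * m - 1) := by
      have := Multiset.sum_le_card_nsmul s (2 * m - 1) (fun u hu => by
        have := (hbmem u hu).2; omega)
      rw [hcard, smul_eq_mul, hsum] at this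
      exact this
    -- another length exists
    have : (k - 1) ∈ lengthSet (Hmon m) a ∨ (k + 1) ∈ lengthSet (Hmon m) a := by
      by_cases hcase : a ≤ (k - 1) * (2 * m - 1)
      · left
        have hge : (k - 1) * m ≤ a :=
          le_trans (Nat.mul_le_mul_right m (by omega)) hlow
        obtain ⟨t, h1, h2, h3⟩ := exists_multiset m hm (k - 1) a hge hcase
        exact ⟨t, h1, fun u hu => (atom_Hmon_iff hm).mpr (h2 u hu), h3⟩
      · right
        push_neg at hcase
        have hge : (k + 1) * m ≤ a := by
          obtain ⟨K, rfl⟩ : ∃ K, k = K + 4 := ⟨k - 4, by omega⟩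
          obtain ⟨M, rfl⟩ : ∃ M, m = M + 2 := ⟨m - 2, by omega⟩
          have hs1 : K + 4 - 1 = K + 3 := by omega
          have hs2 : 2 * (M + 2) - 1 = 2 * M + 3 := by omega
          rw [hs1, hs2] at hcase
          nlinarith [hcase]
        have hle : a ≤ (k + 1) * (2 * m - 1) :=
          le_trans hhigh (Nat.mul_le_mul_right _ (by omega))
        obtain ⟨t, h1, h2, h3⟩ := exists_multiset m hm (k + 1) a hge hle
        exact ⟨t, h1, fun u hu => (atom_Hmon_iff hm).mpr (h2 u hu), h3⟩
    rcases this with h | h <;>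
    · rw [← heq] at h
      simp only [Set.mem_singleton_iff] at h
      omega
end

section
/- If H is a numerical monoid with exactly 4 atoms, then the singleton {3} is an element of 𝓛(H); that is, there exists a ∈ H whose set of lengths L(a) equals {3}. -/
lemma nm_mulmem (H : AddSubmonoid ℕ) {a : ℕ} (ha : a ∈ H) (k : ℕ) : a * k ∈ H := by
  induction k with
  | zero => simpa using H.zero_mem
  | succ n ih => rw [Nat.mul_succ]; exact H.add_mem ih ha

lemma nm_exists_decomp (H : AddSubmonoid ℕ) : ∀ x, x ∈ H →
    ∃ s : Multiset ℕ, (∀ u ∈ s, IsAtomOf H u) ∧ s.sum = x := by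
  intro x
  induction x using Nat.strong_induction_on with
  | _ x ih =>
    intro hx
    rcases eq_or_ne x 0 with rfl | hx0
    · exact ⟨0, by simp⟩
    by_cases hat : IsAtomOf H x
    · exact ⟨{x}, by simpa using hat⟩
    · have : ∃ y z : ℕ, y ∈ H ∧ z ∈ H ∧ y ≠ 0 ∧ z ≠ 0 ∧ x = y + z := by
        by_contra hcon
        push_neg at hcon
        exact hat ⟨hx, hx0, fun y z hy hz hy0 hz0 => hcon y z hy hz hy0 hz0⟩
      obtain ⟨y, z, hy, hz, hy0, hz0, hxyz⟩ := this
      obtain ⟨s1, hs1, hsum1⟩ := ih y (by omega) hy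
      obtain ⟨s2, hs2, hsum2⟩ := ih z (by omega) hz
      refine ⟨s1 + s2, ?_, by rw [Multiset.sum_add, hsum1, hsum2, hxyz]⟩
      intro u hu
      rcases Multiset.mem_add.mp hu with h | h
      exacts [hs1 u h, hs2 u h]

lemma nm_addmul_mod (a b k : ℕ) : (k * a + b) % a = b % a := by
  rw [Nat.add_comm, mul_comm, Nat.add_mul_mod_self_left]


section Helpers

variable {H : AddSubmonoid ℕ} {a1 a2 a3 a4 : ℕ}

lemma nm_modeq (A1 : IsAtomOf H a1) :
    ∀ u v, IsAtomOf H u → IsAtomOf H v → u % a1 = v % a1 → u = v := by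
  have ha1pos : 0 < a1 := Nat.pos_of_ne_zero A1.2.1
  have key : ∀ w z, IsAtomOf H w → IsAtomOf H z → w % a1 = z % a1 → w < z → False := by
    intro w z hw hz h hlt
    have hdvd : a1 ∣ z - w := (Nat.modEq_iff_dvd' (le_of_lt hlt)).mp h
    obtain ⟨k, hk⟩ := hdvd
    have hk0 : k ≠ 0 := by rintro rfl; omega
    exact hz.2.2 w (a1 * k) hw.1 (nm_mulmem H A1.1 k) hw.2.1 (by positivity) (by omega)
  intro u v hu hv h
  rcases Nat.lt_trichotomy u v with hlt | heq | hlt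
  · exact absurd (key u v hu hv h hlt) (by simp)
  · exact heq
  · exact absurd (key v u hv hu h.symm hlt) (by simp)

lemma nm_ge4 (h12 : a1 < a2) (h23 : a2 < a3) (h34 : a3 < a4)
    (A1 : IsAtomOf H a1) (A2 : IsAtomOf H a2) (A3 : IsAtomOf H a3) (A4 : IsAtomOf H a4)
    (hmodeq : ∀ u v, IsAtomOf H u → IsAtomOf H v → u % a1 = v % a1 → u = v) :
    4 ≤ a1 := by
  have ha1pos : 0 < a1 := Nat.pos_of_ne_zero A1.2.1
  have r2 : a2 % a1 ≠ 0 := by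
    intro h; have := hmodeq a2 a1 A2 A1 (by rw [h, Nat.mod_self]); omega
  have r3 : a3 % a1 ≠ 0 := by
    intro h; have := hmodeq a3 a1 A3 A1 (by rw [h, Nat.mod_self]); omega
  have r4 : a4 % a1 ≠ 0 := by
    intro h; have := hmodeq a4 a1 A4 A1 (by rw [h, Nat.mod_self]); omega
  have r23 : a2 % a1 ≠ a3 % a1 := fun h => by have := hmodeq a2 a3 A2 A3 h; omega
  have r24 : a2 % a1 ≠ a4 % a1 := fun h => by have := hmodeq a2 a4 A2 A4 h; omega
  have r34 : a3 % a1 ≠ a4 % a1 := fun h => by have := hmodeq a3 a4 A3 A4 h; omega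
  have b2 : a2 % a1 < a1 := Nat.mod_lt _ ha1pos
  have b3 : a3 % a1 < a1 := Nat.mod_lt _ ha1pos
  have b4 : a4 % a1 < a1 := Nat.mod_lt _ ha1pos
  omega

lemma nm_gcd (hH : IsNumericalMonoid H)
    (hiff : ∀ u, IsAtomOf H u ↔ (u = a1 ∨ u = a2 ∨ u = a3 ∨ u = a4)) :
    ∀ t, 2 ≤ t → t ∣ a1 → t ∣ a2 → t ∣ a3 → t ∣ a4 → False := by
  intro t ht hd1 hd2 hd3 hd4
  obtain ⟨m, hm⟩ := hH.bddAbove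
  have hmem1 : (m + 1 : ℕ) ∈ H := by
    by_contra hc
    have : (m + 1 : ℕ) ∈ ((H : Set ℕ)ᶜ) := hc
    have := hm this; omega
  have hmem2 : (m + 2 : ℕ) ∈ H := by
    by_contra hc
    have : (m + 2 : ℕ) ∈ ((H : Set ℕ)ᶜ) := hc
    have := hm this; omega
  have hdvd : ∀ x ∈ H, t ∣ x := by
    intro x hx
    obtain ⟨s, hs, hsum⟩ := nm_exists_decomp H x hx
    rw [← hsum]
    exact Multiset.dvd_sum fun u hu => by
      rcases (hiff u).mp (hs u hu) with rfl | rfl | rfl | rfl <;> assumption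
  have d1 := hdvd _ hmem1
  have d2 := hdvd _ hmem2
  have ht1 : t ∣ 1 := by
    have := Nat.dvd_sub d2 d1
    simpa using this
  have := Nat.le_of_dvd one_pos ht1
  omega

lemma nm_sumlb (hmin : ∀ u, IsAtomOf H u → a1 ≤ u) :
    ∀ s : Multiset ℕ, (∀ u ∈ s, IsAtomOf H u) → Multiset.card s * a1 ≤ s.sum := by
  intro s hs
  have := Multiset.card_nsmul_le_sum (fun x hx => hmin x (hs x hx))
  simpa [smul_eq_mul] using this

lemma nm_final {c : ℕ} (hc : c ∈ H)
    (hex : ∃ s : Multiset ℕ, Multiset.card s = 3 ∧ (∀ u ∈ s, IsAtomOf H u) ∧ s.sum = c)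
    (huniq : ∀ s : Multiset ℕ, (∀ u ∈ s, IsAtomOf H u) → s.sum = c → Multiset.card s = 3) :
    ({3} : Set ℕ) ∈ systemOfLengths H ∧ ∃ a ∈ H, lengthSet H a = {3} := by
  have hls : lengthSet H c = {3} := by
    ext k
    simp only [lengthSet, Set.mem_setOf_eq, Set.mem_singleton_iff]
    constructor
    · rintro ⟨s, hcards, hats, hsums⟩
      rw [← hcards]; exact huniq s hats hsums
    · rintro rfl; exact hex
  exact ⟨⟨c, hc, hls.symm⟩, ⟨c, hc, hls⟩⟩

end Helpers

section Uniq

variable {H : AddSubmonoid ℕ} {a1 a2 a3 a4 : ℕ}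

lemma nm_uniq1 (h12 : a1 < a2) (h23 : a2 < a3) (h34 : a3 < a4)
    (hiff : ∀ u, IsAtomOf H u ↔ (u = a1 ∨ u = a2 ∨ u = a3 ∨ u = a4))
    (hmodeq : ∀ u v, IsAtomOf H u → IsAtomOf H v → u % a1 = v % a1 → u = v)
    (h1 : ¬ ∃ p q, IsAtomOf H p ∧ IsAtomOf H q ∧ p + q = 3 * a1) :
    ∀ s : Multiset ℕ, (∀ u ∈ s, IsAtomOf H u) → s.sum = 3 * a1 → Multiset.card s = 3 := by
  have A1 : IsAtomOf H a1 := (hiff a1).mpr (Or.inl rfl)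
  have ha1pos : 0 < a1 := Nat.pos_of_ne_zero A1.2.1
  have hmin : ∀ u, IsAtomOf H u → a1 ≤ u := by
    intro u hu; rcases (hiff u).mp hu with rfl | rfl | rfl | rfl <;> omega
  intro s hat hsum
  have hlt4 : Multiset.card s < 4 := by
    by_contra hge
    push_neg at hge
    have hlb := nm_sumlb hmin s hat
    have : 4 * a1 ≤ Multiset.card s * a1 := Nat.mul_le_mul_right a1 hge
    omega
  have h012 : Multiset.card s = 0 ∨ Multiset.card s = 1 ∨ Multiset.card s = 2 ∨
      Multiset.card s = 3 := by omega
  rcases h012 with h | h | h | h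
  · rw [Multiset.card_eq_zero] at h; subst h; simp at hsum; omega
  · rw [Multiset.card_eq_one] at h; obtain ⟨w, rfl⟩ := h
    have hws : w = 3 * a1 := by simpa using hsum
    have hw := hat w (by simp)
    have := hmodeq w a1 hw A1 (by rw [hws, Nat.mul_mod_left, Nat.mod_self])
    omega
  · exfalso
    rw [Multiset.card_eq_two] at h; obtain ⟨w, z, rfl⟩ := h
    have hwz : w + z = 3 * a1 := by simpa using hsum
    exact h1 ⟨w, z, hat w (by simp), hat z (by simp), hwz⟩
  · exact h

lemma nm_uniq2 (h12 : a1 < a2) (h23 : a2 < a3) (h34 : a3 < a4)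
    (hiff : ∀ u, IsAtomOf H u ↔ (u = a1 ∨ u = a2 ∨ u = a3 ∨ u = a4))
    (hmodeq : ∀ u v, IsAtomOf H u → IsAtomOf H v → u % a1 = v % a1 → u = v)
    (ha2lt : a2 < 2 * a1)
    (h2 : ¬ ∃ u v, IsAtomOf H u ∧ IsAtomOf H v ∧ u + v = 2 * a1 + a2) :
    ∀ s : Multiset ℕ, (∀ u ∈ s, IsAtomOf H u) → s.sum = 2 * a1 + a2 →
      Multiset.card s = 3 := by
  have A1 : IsAtomOf H a1 := (hiff a1).mpr (Or.inl rfl)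
  have A2 : IsAtomOf H a2 := (hiff a2).mpr (Or.inr (Or.inl rfl))
  have ha1pos : 0 < a1 := Nat.pos_of_ne_zero A1.2.1
  have hmin : ∀ u, IsAtomOf H u → a1 ≤ u := by
    intro u hu; rcases (hiff u).mp hu with rfl | rfl | rfl | rfl <;> omega
  intro s hat hsum
  have hlt4 : Multiset.card s < 4 := by
    by_contra hge
    push_neg at hge
    have hlb := nm_sumlb hmin s hat
    have : 4 * a1 ≤ Multiset.card s * a1 := Nat.mul_le_mul_right a1 hge
    omega
  have h012 : Multiset.card s = 0 ∨ Multiset.card s = 1 ∨ Multiset.card s = 2 ∨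
      Multiset.card s = 3 := by omega
  rcases h012 with h | h | h | h
  · rw [Multiset.card_eq_zero] at h; subst h; simp at hsum; omega
  · rw [Multiset.card_eq_one] at h; obtain ⟨w, rfl⟩ := h
    have hws : w = 2*a1 + a2 := by simpa using hsum
    have hw := hat w (by simp)
    have := hmodeq w a2 hw A2 (by rw [hws]; exact nm_addmul_mod a1 a2 2)
    omega
  · exfalso
    rw [Multiset.card_eq_two] at h; obtain ⟨w, z, rfl⟩ := h
    have hwz : w + z = 2*a1 + a2 := by simpa using hsum
    exact h2 ⟨w, z, hat w (by simp), hat z (by simp), hwz⟩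
  · exact h

end Uniq

section Uniq3

variable {H : AddSubmonoid ℕ} {a1 a2 a3 a4 : ℕ}

/-- The concrete case `a1 = 4, a2 = 6, a3 = 7`: a multiset of at least 4 atoms cannot
sum to `2*a1 + a4`. -/
lemma nm_c467 (h34 : a3 < a4)
    (hiff : ∀ u, IsAtomOf H u ↔ (u = a1 ∨ u = a2 ∨ u = a3 ∨ u = a4))
    (hmodeq : ∀ u v, IsAtomOf H u → IsAtomOf H v → u % a1 = v % a1 → u = v)
    (e1 : a1 = 4) (e2 : a2 = 6) (e3 : a3 = 7) (h4ge : 2 * a1 ≤ a4)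
    (s : Multiset ℕ) (hat : ∀ u ∈ s, IsAtomOf H u) (hsum : s.sum = 2 * a1 + a4)
    (hge4 : 4 ≤ Multiset.card s) (hmem4 : a4 ∉ s) : False := by
  have A1 : IsAtomOf H a1 := (hiff a1).mpr (Or.inl rfl)
  have A2 : IsAtomOf H a2 := (hiff a2).mpr (Or.inr (Or.inl rfl))
  have A3 : IsAtomOf H a3 := (hiff a3).mpr (Or.inr (Or.inr (Or.inl rfl)))
  have A4 : IsAtomOf H a4 := (hiff a4).mpr (Or.inr (Or.inr (Or.inr rfl)))
  have hmin : ∀ u, IsAtomOf H u → a1 ≤ u := by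
    intro u hu; rcases (hiff u).mp hu with rfl | rfl | rfl | rfl <;> omega
  have hsel : ∀ x ∈ s, x = a1 ∨ x = a2 ∨ x = a3 := by
    intro x hx
    rcases (hiff x).mp (hat x hx) with rfl | rfl | rfl | rfl
    · exact Or.inl rfl
    · exact Or.inr (Or.inl rfl)
    · exact Or.inr (Or.inr rfl)
    · exact absurd hx hmem4
  have h4H : (4:ℕ) ∈ H := e1 ▸ A1.1
  have h6H : (6:ℕ) ∈ H := e2 ▸ A2.1
  have h7H : (7:ℕ) ∈ H := e3 ▸ A3.1
  have hge10 : ∀ n : ℕ, 10 ≤ n → n ∈ H := by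
    intro n
    induction n using Nat.strong_induction_on with
    | _ n ih =>
      intro hn
      have hc5 : n = 10 ∨ n = 11 ∨ n = 12 ∨ n = 13 ∨ 14 ≤ n := by omega
      rcases hc5 with rfl | rfl | rfl | rfl | h14
      · rw [show (10:ℕ) = 4 + 6 from by norm_num]; exact H.add_mem h4H h6H
      · rw [show (11:ℕ) = 4 + 7 from by norm_num]; exact H.add_mem h4H h7H
      · rw [show (12:ℕ) = 4 + (4 + 4) from by norm_num]
        exact H.add_mem h4H (H.add_mem h4H h4H)
      · rw [show (13:ℕ) = 6 + 7 from by norm_num]; exact H.add_mem h6H h7H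
      · rw [show n = (n - 4) + 4 from by omega]
        exact H.add_mem (ih (n-4) (by omega) (by omega)) h4H
  have ha4mod : a4 % 4 = 1 := by
    have m0 : a4 % 4 ≠ 0 := by
      intro h
      have := hmodeq a4 a1 A4 A1 (by rw [e1]; omega)
      omega
    have m2 : a4 % 4 ≠ 2 := by
      intro h
      have := hmodeq a4 a2 A4 A2 (by rw [e1, e2]; omega)
      omega
    have m3 : a4 % 4 ≠ 3 := by
      intro h
      have := hmodeq a4 a3 A4 A3 (by rw [e1, e3]; omega)
      omega
    omega
  have ha4eq : a4 = 9 := by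
    have hc3 : a4 = 9 ∨ a4 = 13 ∨ 17 ≤ a4 := by omega
    rcases hc3 with h | h | h
    · exact h
    · exact (A4.2.2 6 7 h6H h7H (by norm_num) (by norm_num) (by omega)).elim
    · exact (A4.2.2 4 (a4 - 4) h4H (hge10 (a4-4) (by omega)) (by norm_num)
        (by omega) (by omega)).elim
  by_cases hall : ∀ x ∈ s, x = a1
  · have hdvd4 : (4:ℕ) ∣ s.sum :=
      Multiset.dvd_sum fun x hx => by rw [hall x hx, e1]
    rw [hsum] at hdvd4
    omega
  · push_neg at hall
    obtain ⟨u0, hu0, hu0ne⟩ := hall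
    have hse : u0 ::ₘ s.erase u0 = s := Multiset.cons_erase hu0
    have hat' : ∀ x ∈ s.erase u0, IsAtomOf H x :=
      fun x hx => hat x (Multiset.mem_of_mem_erase hx)
    have hlb' := nm_sumlb hmin _ hat'
    have hc' := Multiset.card_erase_of_mem hu0
    rw [Nat.pred_eq_sub_one] at hc'
    have hsum' : u0 + (s.erase u0).sum = 2*a1 + a4 := by
      rw [← hsum]
      conv_rhs => rw [← hse]
      rw [Multiset.sum_cons]
    have hu0ge : a2 ≤ u0 := by
      rcases hsel u0 hu0 with rfl | rfl | rfl
      exacts [absurd rfl hu0ne, le_refl _, by omega]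
    have h3' : 3 * a1 ≤ Multiset.card (s.erase u0) * a1 :=
      Nat.mul_le_mul_right a1 (by omega)
    omega

/-- Uniqueness of length 3 for `2*a1 + a4` in case 2b. -/
lemma nm_uniq3 (h12 : a1 < a2) (h23 : a2 < a3) (h34 : a3 < a4)
    (hiff : ∀ u, IsAtomOf H u ↔ (u = a1 ∨ u = a2 ∨ u = a3 ∨ u = a4))
    (hmodeq : ∀ u v, IsAtomOf H u → IsAtomOf H v → u % a1 = v % a1 → u = v)
    (hgcd : ∀ t, 2 ≤ t → t ∣ a1 → t ∣ a2 → t ∣ a3 → t ∣ a4 → False)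
    (ha1ge4 : 4 ≤ a1)
    {p q : ℕ} (hp : IsAtomOf H p) (hq : IsAtomOf H q) (hpq : p + q = 3 * a1)
    {u v : ℕ} (hu : IsAtomOf H u) (hv : IsAtomOf H v) (huv : u + v = 2 * a1 + a2) :
    ∀ s : Multiset ℕ, (∀ x ∈ s, IsAtomOf H x) → s.sum = 2 * a1 + a4 →
      Multiset.card s = 3 := by
  have A1 : IsAtomOf H a1 := (hiff a1).mpr (Or.inl rfl)
  have A2 : IsAtomOf H a2 := (hiff a2).mpr (Or.inr (Or.inl rfl))
  have A4 : IsAtomOf H a4 := (hiff a4).mpr (Or.inr (Or.inr (Or.inr rfl)))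
  have ha1pos : 0 < a1 := by omega
  have hmin : ∀ x, IsAtomOf H x → a1 ≤ x := by
    intro x hx; rcases (hiff x).mp hx with rfl | rfl | rfl | rfl <;> omega
  -- structural facts from the two failure witnesses
  have hpne : p ≠ a1 := by
    rintro rfl
    have hq2 : q = 2 * p := by omega
    have := hmodeq q p hq A1 (by rw [hq2, Nat.mul_mod_left, Nat.mod_self])
    omega
  have hqne : q ≠ a1 := by
    rintro rfl
    have hp2 : p = 2 * q := by omega
    have := hmodeq p q hp A1 (by rw [hp2, Nat.mul_mod_left, Nat.mod_self])
    omega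
  have hpge : a2 ≤ p := by
    rcases (hiff p).mp hp with rfl | rfl | rfl | rfl
    exacts [absurd rfl hpne, le_refl _, by omega, by omega]
  have hqge : a2 ≤ q := by
    rcases (hiff q).mp hq with rfl | rfl | rfl | rfl
    exacts [absurd rfl hqne, le_refl _, by omega, by omega]
  have ha2lt : a2 < 2 * a1 := by omega
  have hune1 : u ≠ a1 := by
    rintro rfl
    have hveq : v = u + a2 := by omega
    have := hmodeq v a2 hv A2 (by rw [hveq]; exact Nat.add_mod_left u a2)
    omega
  have hvne1 : v ≠ a1 := by
    rintro rfl
    have hueq : u = v + a2 := by omega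
    have := hmodeq u a2 hu A2 (by rw [hueq]; exact Nat.add_mod_left v a2)
    omega
  have hune2 : u ≠ a2 := by
    rintro rfl
    have hveq : v = 2 * a1 := by omega
    have := hmodeq v a1 hv A1 (by rw [hveq, Nat.mul_mod_left, Nat.mod_self])
    omega
  have hvne2 : v ≠ a2 := by
    rintro rfl
    have hueq : u = 2 * a1 := by omega
    have := hmodeq u a1 hu A1 (by rw [hueq, Nat.mul_mod_left, Nat.mod_self])
    omega
  have huge : a3 ≤ u := by
    rcases (hiff u).mp hu with rfl | rfl | rfl | rfl
    exacts [absurd rfl hune1, absurd rfl hune2, le_refl _, by omega]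
  have hvge : a3 ≤ v := by
    rcases (hiff v).mp hv with rfl | rfl | rfl | rfl
    exacts [absurd rfl hvne1, absurd rfl hvne2, le_refl _, by omega]
  have ha3lt : a3 < 2 * a1 := by omega
  intro s hat hsum
  rcases Nat.lt_or_ge (Multiset.card s) 4 with hlt4 | hge4
  · have h012 : Multiset.card s = 0 ∨ Multiset.card s = 1 ∨ Multiset.card s = 2 ∨
        Multiset.card s = 3 := by omega
    rcases h012 with h | h | h | h
    · rw [Multiset.card_eq_zero] at h; subst h; simp at hsum; omega
    · rw [Multiset.card_eq_one] at h; obtain ⟨w, rfl⟩ := h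
      have hws : w = 2*a1 + a4 := by simpa using hsum
      have hw := hat w (by simp)
      have := hmodeq w a4 hw A4 (by rw [hws]; exact nm_addmul_mod a1 a4 2)
      omega
    · exfalso
      rw [Multiset.card_eq_two] at h; obtain ⟨w, z, rfl⟩ := h
      have hwz : w + z = 2*a1 + a4 := by simpa using hsum
      have hwat := hat w (by simp)
      have hzat := hat z (by simp)
      have hwne1 : w ≠ a1 := by
        rintro rfl
        have hz : z = w + a4 := by omega
        have := hmodeq z a4 hzat A4 (by rw [hz]; exact Nat.add_mod_left w a4)
        omega
      have hzne1 : z ≠ a1 := by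
        rintro rfl
        have hw2 : w = z + a4 := by omega
        have := hmodeq w a4 hwat A4 (by rw [hw2]; exact Nat.add_mod_left z a4)
        omega
      have hwne4 : w ≠ a4 := by
        rintro rfl
        have hz : z = 2 * a1 := by omega
        have := hmodeq z a1 hzat A1 (by rw [hz, Nat.mul_mod_left, Nat.mod_self])
        omega
      have hzne4 : z ≠ a4 := by
        rintro rfl
        have hw2 : w = 2 * a1 := by omega
        have := hmodeq w a1 hwat A1 (by rw [hw2, Nat.mul_mod_left, Nat.mod_self])
        omega
      have hwle : w ≤ a3 := by
        rcases (hiff w).mp hwat with rfl | rfl | rfl | rfl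
        exacts [absurd rfl hwne1, by omega, le_refl _, absurd rfl hwne4]
      have hzle : z ≤ a3 := by
        rcases (hiff z).mp hzat with rfl | rfl | rfl | rfl
        exacts [absurd rfl hzne1, by omega, le_refl _, absurd rfl hzne4]
      omega
    · exact h
  · -- card ≥ 4 is impossible
    exfalso
    have hlb := nm_sumlb hmin s hat
    have h4a1 : 4 * a1 ≤ Multiset.card s * a1 := Nat.mul_le_mul_right a1 hge4
    rcases Nat.lt_or_ge a4 (2*a1) with h4lt | h4ge
    · omega
    · by_cases hmem4 : a4 ∈ s
      · have hse : a4 ::ₘ s.erase a4 = s := Multiset.cons_erase hmem4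
        have hc' := Multiset.card_erase_of_mem hmem4
        rw [Nat.pred_eq_sub_one] at hc'
        have hat' : ∀ x ∈ s.erase a4, IsAtomOf H x :=
          fun x hx => hat x (Multiset.mem_of_mem_erase hx)
        have hlb' := nm_sumlb hmin _ hat'
        have hsum' : a4 + (s.erase a4).sum = 2*a1 + a4 := by
          rw [← hsum]
          conv_rhs => rw [← hse]
          rw [Multiset.sum_cons]
        have h3' : 3 * a1 ≤ Multiset.card (s.erase a4) * a1 :=
          Nat.mul_le_mul_right a1 (by omega)
        omega
      · have hsel : ∀ x ∈ s, x = a1 ∨ x = a2 ∨ x = a3 := by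
          intro x hx
          rcases (hiff x).mp (hat x hx) with rfl | rfl | rfl | rfl
          · exact Or.inl rfl
          · exact Or.inr (Or.inl rfl)
          · exact Or.inr (Or.inr rfl)
          · exact absurd hx hmem4
        have hune4 : u ≠ a4 := by rintro rfl; omega
        have hvne4 : v ≠ a4 := by rintro rfl; omega
        have hueq : u = a3 := by
          rcases (hiff u).mp hu with rfl | rfl | rfl | rfl
          exacts [absurd rfl hune1, absurd rfl hune2, rfl, absurd rfl hune4]
        have hveq : v = a3 := by
          rcases (hiff v).mp hv with rfl | rfl | rfl | rfl
          exacts [absurd rfl hvne1, absurd rfl hvne2, rfl, absurd rfl hvne4]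
        rw [hueq, hveq] at huv
        have hpne4 : p ≠ a4 := by rintro rfl; omega
        have hqne4 : q ≠ a4 := by rintro rfl; omega
        have hpcase : p = a2 ∨ p = a3 := by
          rcases (hiff p).mp hp with rfl | rfl | rfl | rfl
          exacts [absurd rfl hpne, Or.inl rfl, Or.inr rfl, absurd rfl hpne4]
        have hqcase : q = a2 ∨ q = a3 := by
          rcases (hiff q).mp hq with rfl | rfl | rfl | rfl
          exacts [absurd rfl hqne, Or.inl rfl, Or.inr rfl, absurd rfl hqne4]
        have hF1 : 2*a2 = 3*a1 ∨ a2 + a3 = 3*a1 := by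
          rcases hpcase with h | h <;> rcases hqcase with h' | h' <;> omega
        rcases hF1 with hI | hII
        · -- a1 = 4w, a2 = 6w, a3 = 7w
          have hmod4 : a1 % 4 = 0 := by omega
          rcases Nat.lt_or_ge a1 8 with hs1 | hs2
          · exact nm_c467 h34 hiff hmodeq (by omega) (by omega) (by omega) h4ge
              s hat hsum hge4 hmem4
          · have hww : a1 = 4 * (a1 / 4) := by omega
            set w := a1 / 4 with hwdef
            have hw2 : a2 = 6 * w := by omega
            have hw3 : a3 = 7 * w := by omega
            have hwge : 2 ≤ w := by omega
            have hdvds : w ∣ s.sum := Multiset.dvd_sum fun x hx => by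
              rcases hsel x hx with rfl | rfl | rfl
              exacts [⟨4, by omega⟩, ⟨6, by omega⟩, ⟨7, by omega⟩]
            rw [hsum] at hdvds
            have hda4 : w ∣ a4 := by
              have h2a1 : w ∣ 2*a1 := ⟨8, by omega⟩
              have hd := Nat.dvd_sub hdvds h2a1
              rwa [show 2*a1 + a4 - 2*a1 = a4 from by omega] at hd
            exact hgcd w hwge ⟨4, by omega⟩ ⟨6, by omega⟩ ⟨7, by omega⟩ hda4
        · -- a1 = 3t, a2 = 4t, a3 = 5t
          have hmod3 : a1 % 3 = 0 := by omega
          have htt : a1 = 3 * (a1 / 3) := by omega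
          set t := a1 / 3 with htdef
          have ht2 : a2 = 4 * t := by omega
          have ht3 : a3 = 5 * t := by omega
          have htge : 2 ≤ t := by omega
          have hdvds : t ∣ s.sum := Multiset.dvd_sum fun x hx => by
            rcases hsel x hx with rfl | rfl | rfl
            exacts [⟨3, by omega⟩, ⟨4, by omega⟩, ⟨5, by omega⟩]
          rw [hsum] at hdvds
          have hda4 : t ∣ a4 := by
            have h2a1 : t ∣ 2*a1 := ⟨6, by omega⟩
            have hd := Nat.dvd_sub hdvds h2a1
            rwa [show 2*a1 + a4 - 2*a1 = a4 from by omega] at hd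
          exact hgcd t htge ⟨3, by omega⟩ ⟨4, by omega⟩ ⟨5, by omega⟩ hda4

end Uniq3

theorem stmt_6 (H : AddSubmonoid ℕ) (hH : IsNumericalMonoid H)
    (hcard : (atomSet H).ncard = 4) :
    ({3} : Set ℕ) ∈ systemOfLengths H ∧ ∃ a ∈ H, lengthSet H a = {3} := by
  -- extract the four atoms
  have hfin : (atomSet H).Finite := by
    rcases (atomSet H).finite_or_infinite with h | h
    · exact h
    · rw [Set.Infinite.ncard h] at hcard; omega
  obtain ⟨a1, a2, a3, a4, h12, h23, h34, hiff⟩ :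
      ∃ a1 a2 a3 a4 : ℕ, a1 < a2 ∧ a2 < a3 ∧ a3 < a4 ∧
        (∀ u, IsAtomOf H u ↔ (u = a1 ∨ u = a2 ∨ u = a3 ∨ u = a4)) := by
    have hFcard : hfin.toFinset.card = 4 := by
      rw [← Set.ncard_eq_toFinset_card (atomSet H) hfin]; exact hcard
    set F := hfin.toFinset with hF
    have hlen : (F.sort (· ≤ ·)).length = 4 := by rw [Finset.length_sort]; exact hFcard
    have hsorted : List.Pairwise (· < ·) (F.sort (· ≤ ·)) := F.sortedLT_sort.pairwise
    have hmem : ∀ u, u ∈ F.sort (· ≤ ·) ↔ IsAtomOf H u := by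
      intro u; rw [Finset.mem_sort, hF, Set.Finite.mem_toFinset]; rfl
    rcases hL : F.sort (· ≤ ·) with _ | ⟨b1, _ | ⟨b2, _ | ⟨b3, _ | ⟨b4, _ | ⟨b5, t⟩⟩⟩⟩⟩ <;>
      rw [hL] at hlen <;> simp at hlen
    rw [hL] at hsorted hmem
    simp only [List.pairwise_cons, List.mem_cons, List.not_mem_nil, or_false,
      List.mem_singleton] at hsorted
    refine ⟨b1, b2, b3, b4, ?_, ?_, ?_, fun u => ?_⟩
    · exact hsorted.1 b2 (by simp)
    · exact hsorted.2.1 b3 (by simp)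
    · exact hsorted.2.2.1 b4 (by simp)
    · rw [← hmem u]; simp
  have A1 : IsAtomOf H a1 := (hiff a1).mpr (Or.inl rfl)
  have A2 : IsAtomOf H a2 := (hiff a2).mpr (Or.inr (Or.inl rfl))
  have A4 : IsAtomOf H a4 := (hiff a4).mpr (Or.inr (Or.inr (Or.inr rfl)))
  have A3 : IsAtomOf H a3 := (hiff a3).mpr (Or.inr (Or.inr (Or.inl rfl)))
  have ha1pos : 0 < a1 := Nat.pos_of_ne_zero A1.2.1
  have hmodeq := nm_modeq A1
  by_cases h1 : ∃ p q, IsAtomOf H p ∧ IsAtomOf H q ∧ p + q = 3 * a1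
  · obtain ⟨p, q, hp, hq, hpq⟩ := h1
    have hpne : p ≠ a1 := by
      rintro rfl
      have hq2 : q = 2 * p := by omega
      have := hmodeq q p hq A1 (by rw [hq2, Nat.mul_mod_left, Nat.mod_self])
      omega
    have hqne : q ≠ a1 := by
      rintro rfl
      have hp2 : p = 2 * q := by omega
      have := hmodeq p q hp A1 (by rw [hp2, Nat.mul_mod_left, Nat.mod_self])
      omega
    have hpge : a2 ≤ p := by
      rcases (hiff p).mp hp with rfl | rfl | rfl | rfl
      exacts [absurd rfl hpne, le_refl _, by omega, by omega]
    have hqge : a2 ≤ q := by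
      rcases (hiff q).mp hq with rfl | rfl | rfl | rfl
      exacts [absurd rfl hqne, le_refl _, by omega, by omega]
    have ha2lt : a2 < 2 * a1 := by omega
    by_cases h2 : ∃ u v, IsAtomOf H u ∧ IsAtomOf H v ∧ u + v = 2 * a1 + a2
    · -- use c = 2*a1 + a4
      obtain ⟨u, v, hu, hv, huv⟩ := h2
      refine nm_final (c := 2*a1 + a4) ?_ ?_ ?_
      · rw [show 2*a1 + a4 = a1 + (a1 + a4) from by ring]
        exact H.add_mem A1.1 (H.add_mem A1.1 A4.1)
      · refine ⟨{a1, a1, a4}, by simp, ?_, ?_⟩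
        · intro x hx
          have : x = a1 ∨ x = a1 ∨ x = a4 := by simpa using hx
          rcases this with rfl | rfl | rfl
          exacts [A1, A1, A4]
        · simp [Multiset.sum_cons]; ring
      · exact nm_uniq3 h12 h23 h34 hiff hmodeq
          (nm_gcd hH hiff)
          (nm_ge4 h12 h23 h34 A1 A2 A3 A4 hmodeq)
          hp hq hpq hu hv huv
    · -- use c = 2*a1 + a2
      refine nm_final (c := 2*a1 + a2) ?_ ?_ ?_
      · rw [show 2*a1 + a2 = a1 + (a1 + a2) from by ring]
        exact H.add_mem A1.1 (H.add_mem A1.1 A2.1)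
      · refine ⟨{a1, a1, a2}, by simp, ?_, ?_⟩
        · intro x hx
          have : x = a1 ∨ x = a1 ∨ x = a2 := by simpa using hx
          rcases this with rfl | rfl | rfl
          exacts [A1, A1, A2]
        · simp [Multiset.sum_cons]; ring
      · exact nm_uniq2 h12 h23 h34 hiff hmodeq ha2lt h2
  · -- use c = 3*a1
    refine nm_final (c := 3 * a1) ?_ ?_ ?_
    · rw [show 3*a1 = a1 + (a1 + a1) from by ring]
      exact H.add_mem A1.1 (H.add_mem A1.1 A1.1)
    · refine ⟨{a1, a1, a1}, by simp, ?_, ?_⟩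
      · intro x hx
        have : x = a1 := by simpa using hx
        rw [this]; exact A1
      · simp [Multiset.sum_cons]; ring
    · exact nm_uniq1 h12 h23 h34 hiff hmodeq h1
end

section
/- Let H be a numerical monoid. If the singleton {4} is not an element of 𝓛(H), then for every integer k ≥ 5 the singleton {k} is not an element of 𝓛(H). -/
theorem stmt_9 (H : AddSubmonoid ℕ) (hH : IsNumericalMonoid H)
    (h4 : ({4} : Set ℕ) ∉ systemOfLengths H) :
    ∀ k : ℕ, 5 ≤ k → ({k} : Set ℕ) ∉ systemOfLengths H := by
  intro k hk hkL
  apply h4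
  obtain ⟨a, ha, hL⟩ := hkL
  have hk_mem : k ∈ lengthSet H a := by rw [← hL]; rfl
  obtain ⟨s, hcard, hatoms, hsum⟩ := hk_mem
  set t : Multiset ℕ := (↑(s.toList.take 4) : Multiset ℕ) with ht
  have hts : t ≤ s := by
    have h1 : (s.toList.take 4).Subperm s.toList := (List.take_sublist 4 s.toList).subperm
    have := Multiset.coe_le.mpr h1
    simpa using this
  have hcardt : Multiset.card t = 4 := by
    simp only [ht, Multiset.coe_card, List.length_take, Multiset.length_toList]
    omega
  have hatomt : ∀ u ∈ t, IsAtomOf H u := fun u hu => hatoms u (Multiset.mem_of_le hts hu)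
  refine ⟨t.sum, AddSubmonoid.multiset_sum_mem _ _ (fun u hu => (hatomt u hu).1), ?_⟩
  ext m
  simp only [Set.mem_singleton_iff]
  constructor
  · rintro rfl
    exact ⟨t, hcardt, hatomt, rfl⟩
  · rintro ⟨s', hc', hat', hsum'⟩
    have hlong : (m + (k - 4)) ∈ lengthSet H a := by
      refine ⟨s' + (s - t), ?_, ?_, ?_⟩
      · simp only [Multiset.card_add, hc', Multiset.card_sub hts, hcard, hcardt]
      · intro u hu
        rcases Multiset.mem_add.mp hu with h | h
        · exact hat' u h
        · exact hatoms u (Multiset.mem_of_le (tsub_le_self) h)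
      · have : t + (s - t) = s := by
          rw [add_comm]
          exact tsub_add_cancel_of_le hts
        calc (s' + (s - t)).sum = s'.sum + (s - t).sum := Multiset.sum_add _ _
          _ = t.sum + (s - t).sum := by rw [hsum']
          _ = (t + (s - t)).sum := (Multiset.sum_add _ _).symm
          _ = a := by rw [this, hsum]
    rw [← hL] at hlong
    have : m + (k - 4) = k := hlong
    omega
end

section
/- Let m ≥ 2 be an integer and let H be the additive submonoid of ℕ generated by the interval of integers [m, 2m−1] = {m, m+1, …, 2m−1}. Then H is a numerical monoid, the set of atoms of H is exactly [m, 2m−1] (so H has exactly m atoms), and {4} ∉ 𝓛(H); consequently {k} ∉ 𝓛(H) for every k ≥ 4. -/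
lemma mem_cl_iff (m : ℕ) (hm : 2 ≤ m) (n : ℕ) :
    n ∈ AddSubmonoid.closure (Set.Icc m (2 * m - 1)) ↔ n = 0 ∨ m ≤ n := by
  constructor
  · intro h
    have hle : AddSubmonoid.closure (Set.Icc m (2 * m - 1)) ≤
        { carrier := {n | n = 0 ∨ m ≤ n},
          zero_mem' := Or.inl rfl,
          add_mem' := by intro a b ha hb; simp only [Set.mem_setOf_eq] at *; omega } := by
      rw [AddSubmonoid.closure_le]; intro x hx; exact Or.inr hx.1
    exact hle h
  · rintro (rfl | h)
    · exact zero_mem _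
    · induction n using Nat.strong_induction_on with
      | _ n ih =>
        by_cases h2 : n ≤ 2 * m - 1
        · exact AddSubmonoid.subset_closure ⟨h, h2⟩
        · have : n = m + (n - m) := by omega
          rw [this]
          exact add_mem (AddSubmonoid.subset_closure ⟨le_refl m, by omega⟩)
            (ih (n - m) (by omega) (by omega))

lemma sum_interval (m : ℕ) (hm : 2 ≤ m) (a k : ℕ) :
    (∃ s : Multiset ℕ, Multiset.card s = k ∧ (∀ u ∈ s, u ∈ Set.Icc m (2 * m - 1)) ∧ s.sum = a)
    ↔ k * m ≤ a ∧ a ≤ k * (2 * m - 1) := by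
  constructor
  · rintro ⟨s, rfl, hmem, rfl⟩
    constructor
    · have := Multiset.card_nsmul_le_sum (fun x hx => (hmem x hx).1)
      simpa [smul_eq_mul] using this
    · have := Multiset.sum_le_card_nsmul s _ (fun x hx => (hmem x hx).2)
      simpa [smul_eq_mul] using this
  · induction k generalizing a with
    | zero => rintro ⟨h1, h2⟩; exact ⟨0, rfl, by simp, by simp only [Multiset.sum_zero]; omega⟩
    | succ k ih =>
      rintro ⟨h1, h2⟩
      have e1 : (k + 1) * m = k * m + m := Nat.succ_mul k m
      have e2 : (k + 1) * (2 * m - 1) = k * (2 * m - 1) + (2 * m - 1) := Nat.succ_mul k _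
      have hAB : k * m ≤ k * (2 * m - 1) := Nat.mul_le_mul_left _ (by omega)
      set u := min (2 * m - 1) (a - k * m) with hu
      obtain ⟨s, hc, hmem, hsum⟩ := ih (a - u) ⟨by omega, by omega⟩
      refine ⟨u ::ₘ s, by simp [hc], ?_, ?_⟩
      · intro v hv
        rcases Multiset.mem_cons.mp hv with rfl | h
        · exact ⟨by omega, by omega⟩
        · exact hmem v h
      · simp only [Multiset.sum_cons, hsum]; omega

theorem stmt_10 (m : ℕ) (hm : 2 ≤ m)
    (H : AddSubmonoid ℕ) (hH : H = AddSubmonoid.closure (Set.Icc m (2 * m - 1))) :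
    IsNumericalMonoid H ∧
    atomSet H = Set.Icc m (2 * m - 1) ∧
    (atomSet H).ncard = m ∧
    ({4} : Set ℕ) ∉ systemOfLengths H ∧
    (∀ k : ℕ, 4 ≤ k → ({k} : Set ℕ) ∉ systemOfLengths H) := by
  have hmem : ∀ n, n ∈ H ↔ n = 0 ∨ m ≤ n := by
    intro n; rw [hH]; exact mem_cl_iff m hm n
  have hatom : atomSet H = Set.Icc m (2 * m - 1) := by
    ext u
    constructor
    · rintro ⟨huH, hu0, hdec⟩
      have h1 : m ≤ u := by have := (hmem u).mp huH; omega
      refine ⟨h1, ?_⟩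
      by_contra h2
      exact hdec m (u - m) ((hmem m).mpr (Or.inr le_rfl))
        ((hmem (u - m)).mpr (Or.inr (by omega))) (by omega) (by omega) (by omega)
    · rintro ⟨h1, h2⟩
      refine ⟨(hmem u).mpr (Or.inr h1), by omega, ?_⟩
      intro x y hx hy hx0 hy0
      have := (hmem x).mp hx
      have := (hmem y).mp hy
      omega
  have hlen : ∀ a k, k ∈ lengthSet H a ↔ k * m ≤ a ∧ a ≤ k * (2 * m - 1) := by
    intro a k
    rw [← sum_interval m hm a k]
    unfold lengthSet
    simp only [Set.mem_setOf_eq]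
    constructor <;> rintro ⟨s, hc, hm', hs⟩ <;> refine ⟨s, hc, ?_, hs⟩
    · intro v hv; have := hm' v hv; rw [← hatom]; exact this
    · intro v hv
      have hv2 : v ∈ atomSet H := by rw [hatom]; exact hm' v hv
      exact hv2
  have key : ∀ k : ℕ, 4 ≤ k → ({k} : Set ℕ) ∉ systemOfLengths H := by
    intro k hk ⟨a, ha, heq⟩
    have hkL : k ∈ lengthSet H a := by rw [← heq]; rfl
    obtain ⟨h1, h2⟩ := (hlen a k).mp hkL
    by_cases hc : (k + 1) * m ≤ a
    · have : (k + 1) ∈ lengthSet H a := by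
        refine (hlen a (k + 1)).mpr ⟨hc, le_trans h2 (Nat.mul_le_mul_right _ (by omega))⟩
      rw [← heq] at this
      simp at this
    · have hlt : a < (k + 1) * m := by omega
      obtain ⟨j, rfl⟩ : ∃ j, k = 4 + j := ⟨k - 4, by omega⟩
      obtain ⟨n, rfl⟩ : ∃ n, m = 2 + n := ⟨m - 2, by omega⟩
      have : (4 + j - 1) ∈ lengthSet H a := by
        refine (hlen a (4 + j - 1)).mpr ⟨?_, ?_⟩
        · calc (4 + j - 1) * (2 + n) ≤ (4 + j) * (2 + n) := Nat.mul_le_mul_right _ (by omega)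
          _ ≤ a := h1
        · have e : 2 * (2 + n) - 1 = 2 * n + 3 := by omega
          have e2 : (4 + j - 1) = 3 + j := by omega
          rw [e, e2]
          have hlt' : a < (5 + j) * (2 + n) := by convert hlt using 2; omega
          nlinarith
      rw [← heq] at this
      simp only [Set.mem_singleton_iff] at this
      omega
  refine ⟨?_, hatom, ?_, key 4 (by norm_num), key⟩
  · apply Set.Finite.subset (Set.finite_Iio m)
    intro n hn
    simp only [Set.mem_compl_iff, SetLike.mem_coe, hmem] at hn
    simp only [Set.mem_Iio]; omega
  · rw [hatom, ← Finset.coe_Icc, Set.ncard_coe_finset, Nat.card_Icc]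
    omega
end

section
/- Let m ≥ 2 and let H be the additive submonoid of ℕ generated by A = [m, 2m−1]. For every a ∈ H with 4 ∈ L(a): if a ≥ 5m, then 5 ∈ L(a), and if a ≤ 5m−1, then 3 ∈ L(a). In particular, L(a) ≠ {4} for every a ∈ H. -/
section
variable (m : ℕ)

lemma sum_exists (hm : 2 ≤ m) :
    ∀ k a : ℕ, k * m ≤ a → a ≤ k * (2 * m - 1) →
      ∃ s : Multiset ℕ, Multiset.card s = k ∧ (∀ u ∈ s, u ∈ Set.Icc m (2*m-1)) ∧ s.sum = a := by
  intro k
  induction k with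
  | zero =>
    intro a h1 h2
    exact ⟨0, by simp, by simp, by simp; omega⟩
  | succ k ih =>
    intro a h1 h2
    have hbc : k*m ≤ k*(2*m-1) := Nat.mul_le_mul_left k (by omega)
    rw [Nat.succ_mul] at h1 h2
    set u := min (2*m-1) (a - k*m) with hu
    obtain ⟨s, hc, hmem, hsum⟩ := ih (a - u) (by omega) (by omega)
    refine ⟨u ::ₘ s, by simp [hc], ?_, ?_⟩
    · intro v hv
      rcases Multiset.mem_cons.1 hv with h | h
      · subst h; constructor <;> omega
      · exact hmem v h
    · simp [hsum]; omega

lemma sum_bounds : ∀ s : Multiset ℕ, (∀ u ∈ s, u ∈ Set.Icc m (2*m-1)) →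
    Multiset.card s * m ≤ s.sum ∧ s.sum ≤ Multiset.card s * (2*m-1) := by
  intro s
  induction s using Multiset.induction with
  | empty => simp
  | cons x t ih =>
    intro h
    have hx := h x (Multiset.mem_cons_self x t)
    have ht := ih (fun u hu => h u (Multiset.mem_cons_of_mem hu))
    simp only [Multiset.sum_cons, Multiset.card_cons]
    rw [Nat.succ_mul, Nat.succ_mul]
    simp only [Set.mem_Icc] at hx
    omega

lemma mem_iff (hm : 2 ≤ m) (a : ℕ) :
    a ∈ AddSubmonoid.closure (Set.Icc m (2*m-1)) ↔ ∃ k, k * m ≤ a ∧ a ≤ k * (2*m-1) := by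
  constructor
  · intro h
    induction h using AddSubmonoid.closure_induction with
    | mem x hx => exact ⟨1, by simp at hx ⊢; omega⟩
    | zero => exact ⟨0, by simp⟩
    | add x y hx hy ihx ihy =>
      obtain ⟨k1, h1, h2⟩ := ihx
      obtain ⟨k2, h3, h4⟩ := ihy
      exact ⟨k1 + k2, by rw [Nat.add_mul]; omega, by rw [Nat.add_mul]; omega⟩
  · rintro ⟨k, h1, h2⟩
    obtain ⟨s, hc, hmem, hsum⟩ := sum_exists m hm k a h1 h2
    rw [← hsum]
    exact AddSubmonoid.multiset_sum_mem _ s (fun x hx => AddSubmonoid.subset_closure (hmem x hx))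

lemma mem_lb (hm : 2 ≤ m) {a : ℕ}
    (h : a ∈ AddSubmonoid.closure (Set.Icc m (2*m-1))) (h0 : a ≠ 0) : m ≤ a := by
  obtain ⟨k, h1, h2⟩ := (mem_iff m hm a).1 h
  rcases Nat.eq_zero_or_pos k with rfl | hk
  · simp at h2; omega
  · calc m = 1 * m := (one_mul m).symm
    _ ≤ k * m := Nat.mul_le_mul_right m hk
    _ ≤ a := h1

lemma atom_iff (hm : 2 ≤ m) (u : ℕ) :
    IsAtomOf (AddSubmonoid.closure (Set.Icc m (2*m-1))) u ↔ u ∈ Set.Icc m (2*m-1) := by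
  constructor
  · rintro ⟨hu, h0, hsum⟩
    obtain ⟨k, h1, h2⟩ := (mem_iff m hm u).1 hu
    have hk : 1 ≤ k := by
      rcases Nat.eq_zero_or_pos k with rfl | hk
      · simp at h2; omega
      · exact hk
    rcases Nat.lt_or_ge k 2 with hk2 | hk2
    · have : k = 1 := by omega
      subst this
      simp only [one_mul] at h1 h2
      exact ⟨h1, h2⟩
    · exfalso
      obtain ⟨s, hc, hmem, hs⟩ := sum_exists m hm k u h1 h2
      have hne : s ≠ 0 := by
        intro h; subst h; simp at hc; omega
      obtain ⟨x, hx⟩ := Multiset.exists_mem_of_ne_zero hne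
      obtain ⟨t, rfl⟩ := Multiset.exists_cons_of_mem hx
      have hxA := hmem x (Multiset.mem_cons_self x t)
      have htA : ∀ v ∈ t, v ∈ Set.Icc m (2*m-1) :=
        fun v hv => hmem v (Multiset.mem_cons_of_mem hv)
      have htH : t.sum ∈ AddSubmonoid.closure (Set.Icc m (2*m-1)) :=
        AddSubmonoid.multiset_sum_mem _ t (fun v hv => AddSubmonoid.subset_closure (htA v hv))
      have hct : Multiset.card t = k - 1 := by simp at hc; omega
      have htb := (sum_bounds m t htA).1
      have htne : t.sum ≠ 0 := by
        rw [hct] at htb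
        have : 1 * m ≤ (k-1) * m := Nat.mul_le_mul_right m (by omega)
        omega
      exact hsum x t.sum (AddSubmonoid.subset_closure hxA) htH
        (by simp at hxA; omega) htne (by rw [← hs]; simp)
  · intro hu
    simp only [Set.mem_Icc] at hu
    refine ⟨AddSubmonoid.subset_closure (by simp [Set.mem_Icc]; omega), by omega, ?_⟩
    intro x y hx hy hx0 hy0 hxy
    have := mem_lb m hm hx hx0
    have := mem_lb m hm hy hy0
    omega

lemma length_iff (hm : 2 ≤ m) (a k : ℕ) :
    k ∈ lengthSet (AddSubmonoid.closure (Set.Icc m (2*m-1))) a ↔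
      ∃ s : Multiset ℕ, Multiset.card s = k ∧ (∀ u ∈ s, u ∈ Set.Icc m (2*m-1)) ∧ s.sum = a := by
  unfold lengthSet
  simp only [Set.mem_setOf_eq]
  constructor
  · rintro ⟨s, h1, h2, h3⟩
    exact ⟨s, h1, fun u hu => (atom_iff m hm u).1 (h2 u hu), h3⟩
  · rintro ⟨s, h1, h2, h3⟩
    exact ⟨s, h1, fun u hu => (atom_iff m hm u).2 (h2 u hu), h3⟩

end

theorem stmt_11 (m : ℕ) (hm : 2 ≤ m)
    (H : AddSubmonoid ℕ) (hH : H = AddSubmonoid.closure (Set.Icc m (2 * m - 1))) :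
    (∀ a ∈ H, 4 ∈ lengthSet H a →
      ((5 * m ≤ a → 5 ∈ lengthSet H a) ∧ (a ≤ 5 * m - 1 → 3 ∈ lengthSet H a))) ∧
    (∀ a ∈ H, lengthSet H a ≠ {4}) := by
  subst hH
  have part1 : ∀ a ∈ AddSubmonoid.closure (Set.Icc m (2 * m - 1)),
      4 ∈ lengthSet (AddSubmonoid.closure (Set.Icc m (2 * m - 1))) a →
      ((5 * m ≤ a → 5 ∈ lengthSet (AddSubmonoid.closure (Set.Icc m (2 * m - 1))) a) ∧
       (a ≤ 5 * m - 1 → 3 ∈ lengthSet (AddSubmonoid.closure (Set.Icc m (2 * m - 1))) a)) := by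
    intro a _ h4
    obtain ⟨s, hc, hmem, hsum⟩ := (length_iff m hm a 4).1 h4
    have hb := sum_bounds m s hmem
    rw [hc, hsum] at hb
    constructor
    · intro h5
      exact (length_iff m hm a 5).2 (sum_exists m hm 5 a (by omega) (by omega))
    · intro h5
      exact (length_iff m hm a 3).2 (sum_exists m hm 3 a (by omega) (by omega))
  refine ⟨part1, ?_⟩
  intro a ha hL
  have h4 : 4 ∈ lengthSet (AddSubmonoid.closure (Set.Icc m (2 * m - 1))) a := by
    rw [hL]; rfl
  obtain ⟨p5, p3⟩ := part1 a ha h4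
  rcases le_or_gt (5 * m) a with h | h
  · have := p5 h
    rw [hL] at this
    simp at this
  · have := p3 (by omega)
    rw [hL] at this
    simp at this
end

section
/- Let m ≥ 6 be an integer and let A = {m} ∪ [m+3, 2m−1] ∪ {2m+1, 2m+2} ⊆ ℕ. Then the iterated sumsets of A satisfy: 2A = {2m} ∪ [2m+3, 4m+4], 3A = {3m} ∪ [3m+3, 6m+6], and 4A = {4m} ∪ [4m+3, 8m+8]; in particular 3A ⊆ 2A ∪ 4A. -/
/-- The `k`-fold sumset of `A`: all sums of `k` elements of `A`. -/
def nfoldSumset (A : Set ℕ) (k : ℕ) : Set ℕ :=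
  {n | ∃ s : Multiset ℕ, Multiset.card s = k ∧ (∀ x ∈ s, x ∈ A) ∧ s.sum = n}

lemma nfold_succ_mem (A : Set ℕ) (k n : ℕ) :
    n ∈ nfoldSumset A (k+1) ↔ ∃ a ∈ A, ∃ b ∈ nfoldSumset A k, n = a + b := by
  constructor
  · rintro ⟨s, hcard, hmem, hsum⟩
    have hpos : s ≠ 0 := by
      intro h; rw [h] at hcard; simp at hcard
    obtain ⟨a, ha⟩ := Multiset.exists_mem_of_ne_zero hpos
    refine ⟨a, hmem a ha, (s.erase a).sum, ⟨s.erase a, ?_, ?_, rfl⟩, ?_⟩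
    · rw [Multiset.card_erase_of_mem ha, hcard]; rfl
    · intro x hx; exact hmem x (Multiset.mem_of_mem_erase hx)
    · rw [← hsum, ← Multiset.sum_cons, Multiset.cons_erase ha]
  · rintro ⟨a, ha, b, ⟨s, hcard, hmem, hsum⟩, rfl⟩
    refine ⟨a ::ₘ s, by simp [hcard], ?_, by simp [hsum]⟩
    intro x hx
    rcases Multiset.mem_cons.mp hx with h | h
    · exact h ▸ ha
    · exact hmem x h

lemma nfold_zero_mem (A : Set ℕ) (n : ℕ) : n ∈ nfoldSumset A 0 ↔ n = 0 := by
  constructor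
  · rintro ⟨s, hcard, hmem, hsum⟩
    rw [Multiset.card_eq_zero] at hcard; rw [hcard] at hsum; simpa using hsum.symm
  · rintro rfl; exact ⟨0, by simp, by simp, by simp⟩

lemma nfold_one_mem (A : Set ℕ) (n : ℕ) : n ∈ nfoldSumset A 1 ↔ n ∈ A := by
  rw [nfold_succ_mem]
  constructor
  · rintro ⟨a, ha, b, hb, rfl⟩
    rw [nfold_zero_mem] at hb; subst hb; simpa using ha
  · intro h; exact ⟨n, h, 0, (nfold_zero_mem A 0).mpr rfl, by simp⟩

theorem stmt_12 (m : ℕ) (hm : 6 ≤ m)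
    (A : Set ℕ)
    (hA : A = ({m} : Set ℕ) ∪ Set.Icc (m + 3) (2 * m - 1) ∪ {2 * m + 1, 2 * m + 2}) :
    nfoldSumset A 2 = ({2 * m} : Set ℕ) ∪ Set.Icc (2 * m + 3) (4 * m + 4) ∧
    nfoldSumset A 3 = ({3 * m} : Set ℕ) ∪ Set.Icc (3 * m + 3) (6 * m + 6) ∧
    nfoldSumset A 4 = ({4 * m} : Set ℕ) ∪ Set.Icc (4 * m + 3) (8 * m + 8) ∧
    nfoldSumset A 3 ⊆ nfoldSumset A 2 ∪ nfoldSumset A 4 := by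
  have hAiff : ∀ x : ℕ, x ∈ A ↔
      (x = m ∨ (m + 3 ≤ x ∧ x ≤ 2 * m - 1) ∨ x = 2 * m + 1 ∨ x = 2 * m + 2) := by
    intro x
    rw [hA]
    simp [Set.mem_union, Set.mem_Icc, Set.mem_singleton_iff, Set.mem_insert_iff]
    tauto
  have hA' : ∀ x : ℕ,
      (x = m ∨ (m + 3 ≤ x ∧ x ≤ 2 * m - 1) ∨ x = 2 * m + 1 ∨ x = 2 * m + 2) → x ∈ A :=
    fun x => (hAiff x).mpr
  have hbd : ∀ x ∈ A, m ≤ x ∧ x ≤ 2 * m + 2 ∧ (x = m ∨ m + 3 ≤ x) := by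
    intro x hx
    have := (hAiff x).mp hx
    omega
  have hmA : m ∈ A := hA' m (Or.inl rfl)
  -- 2A
  have h2 : nfoldSumset A 2 = ({2 * m} : Set ℕ) ∪ Set.Icc (2 * m + 3) (4 * m + 4) := by
    ext n
    simp only [Set.mem_union, Set.mem_singleton_iff, Set.mem_Icc]
    rw [show (2:ℕ) = 1 + 1 from rfl, nfold_succ_mem]
    simp only [nfold_one_mem]
    constructor
    · rintro ⟨a, ha, b, hb, rfl⟩
      have h1 := hbd a ha
      have h2 := hbd b hb
      omega
    · intro h
      rcases h with h | ⟨h1, h2⟩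
      · exact ⟨m, hmA, m, hmA, by omega⟩
      · by_cases c1 : n ≤ 3 * m - 1
        · exact ⟨m, hmA, n - m, hA' _ (by omega), by omega⟩
        by_cases c2 : n ≤ 3 * m + 2
        · exact ⟨n - (m + 3), hA' _ (by omega), m + 3, hA' _ (by omega), by omega⟩
        by_cases c3 : n ≤ 4 * m - 2
        · exact ⟨2 * m - 1, hA' _ (by omega), n - (2 * m - 1), hA' _ (by omega), by omega⟩
        by_cases c4 : n ≤ 4 * m + 1
        · exact ⟨2 * m + 2, hA' _ (by omega), n - (2 * m + 2), hA' _ (by omega), by omega⟩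
        by_cases c5 : n ≤ 4 * m + 3
        · exact ⟨2 * m + 1, hA' _ (by omega), n - (2 * m + 1), hA' _ (by omega), by omega⟩
        · exact ⟨2 * m + 2, hA' _ (by omega), 2 * m + 2, hA' _ (by omega), by omega⟩
  -- 3A
  have h3 : nfoldSumset A 3 = ({3 * m} : Set ℕ) ∪ Set.Icc (3 * m + 3) (6 * m + 6) := by
    ext n
    simp only [Set.mem_union, Set.mem_singleton_iff, Set.mem_Icc]
    rw [show (3:ℕ) = 2 + 1 from rfl, nfold_succ_mem]
    constructor
    · rintro ⟨a, ha, b, hb, rfl⟩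
      have h1 := hbd a ha
      rw [h2] at hb
      simp only [Set.mem_union, Set.mem_singleton_iff, Set.mem_Icc] at hb
      omega
    · intro h
      have mem2 : ∀ x, (x = 2 * m ∨ (2 * m + 3 ≤ x ∧ x ≤ 4 * m + 4)) → x ∈ nfoldSumset A 2 := by
        intro x hx
        rw [h2]
        simp only [Set.mem_union, Set.mem_singleton_iff, Set.mem_Icc]
        exact hx
      rcases h with h | ⟨h1, h2'⟩
      · exact ⟨m, hmA, 2 * m, mem2 _ (by omega), by omega⟩
      · by_cases c1 : n ≤ 5 * m + 4
        · exact ⟨m, hmA, n - m, mem2 _ (by omega), by omega⟩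
        by_cases c2 : n ≤ 6 * m + 5
        · exact ⟨2 * m + 1, hA' _ (by omega), n - (2 * m + 1), mem2 _ (by omega), by omega⟩
        · exact ⟨2 * m + 2, hA' _ (by omega), n - (2 * m + 2), mem2 _ (by omega), by omega⟩
  -- 4A
  have h4 : nfoldSumset A 4 = ({4 * m} : Set ℕ) ∪ Set.Icc (4 * m + 3) (8 * m + 8) := by
    ext n
    simp only [Set.mem_union, Set.mem_singleton_iff, Set.mem_Icc]
    rw [show (4:ℕ) = 3 + 1 from rfl, nfold_succ_mem]
    constructor
    · rintro ⟨a, ha, b, hb, rfl⟩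
      have h1 := hbd a ha
      rw [h3] at hb
      simp only [Set.mem_union, Set.mem_singleton_iff, Set.mem_Icc] at hb
      omega
    · intro h
      have mem3 : ∀ x, (x = 3 * m ∨ (3 * m + 3 ≤ x ∧ x ≤ 6 * m + 6)) → x ∈ nfoldSumset A 3 := by
        intro x hx
        rw [h3]
        simp only [Set.mem_union, Set.mem_singleton_iff, Set.mem_Icc]
        exact hx
      rcases h with h | ⟨h1, h2'⟩
      · exact ⟨m, hmA, 3 * m, mem3 _ (by omega), by omega⟩
      · by_cases c1 : n ≤ 7 * m + 6
        · exact ⟨m, hmA, n - m, mem3 _ (by omega), by omega⟩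
        by_cases c2 : n ≤ 8 * m + 7
        · exact ⟨2 * m + 1, hA' _ (by omega), n - (2 * m + 1), mem3 _ (by omega), by omega⟩
        · exact ⟨2 * m + 2, hA' _ (by omega), n - (2 * m + 2), mem3 _ (by omega), by omega⟩
  refine ⟨h2, h3, h4, ?_⟩
  rw [h2, h3, h4]
  intro n hn
  simp only [Set.mem_union, Set.mem_singleton_iff, Set.mem_Icc] at hn ⊢
  omega
end

section
/- For all integers m ≥ 2 and d ≥ 1, the set {1+(m−1)d, 1+md, …, 1+(2m−2)d} generates a numerical monoid H_{m,d} (its complement in ℕ is finite, since the gcd of the generators is 1), and every one of the m generators is an atom of H_{m,d}; indeed the set of atoms of H_{m,d} is exactly {1+(m−1)d, 1+md, …, 1+(2m−2)d}. -/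
/-- Chicken McNugget style: every `n ≥ a * b` with `a, b` coprime is a combination. -/
lemma exists_rep (a b : ℕ) (hb : b ≠ 0) (hab : Nat.Coprime a b) (n : ℕ) (hn : a * b ≤ n) :
    ∃ x y : ℕ, n = x * a + y * b := by
  haveI : NeZero b := ⟨hb⟩
  have ha : IsUnit (a : ZMod b) := (ZMod.isUnit_iff_coprime a b).2 hab
  set x := ((n : ZMod b) * (a : ZMod b)⁻¹).val with hx
  have hxlt : x < b := ZMod.val_lt _
  have hxa : x * a ≤ n := by
    calc x * a ≤ (b - 1) * a := Nat.mul_le_mul_right a (by omega)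
    _ ≤ a * b - a := by rw [Nat.sub_mul, one_mul, Nat.mul_comm]
    _ ≤ n := le_trans (Nat.sub_le _ _) hn
  have hdvd : b ∣ n - x * a := by
    rw [← ZMod.natCast_eq_zero_iff]
    push_cast [Nat.cast_sub hxa]
    rw [hx, ZMod.natCast_zmod_val, mul_assoc, ZMod.inv_mul_of_unit _ ha, mul_one, sub_self]
  obtain ⟨y, hy⟩ := hdvd
  exact ⟨x, y, by rw [Nat.mul_comm y b]; omega⟩

theorem stmt_14 (m d : ℕ) (hm : 2 ≤ m) (hd : 1 ≤ d)
    (G : Set ℕ) (hG : G = {n : ℕ | ∃ j < m, n = 1 + (m - 1 + j) * d}) :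
    IsNumericalMonoid (AddSubmonoid.closure G) ∧
    (∀ g ∈ G, IsAtomOf (AddSubmonoid.closure G) g) ∧
    atomSet (AddSubmonoid.closure G) = G := by
  set a := 1 + (m - 1) * d with ha
  set b := 1 + m * d with hb
  have haG : a ∈ G := by
    rw [hG]; exact ⟨0, by omega, by simp [ha]⟩
  have hbG : b ∈ G := by
    rw [hG]; refine ⟨1, by omega, ?_⟩
    have : m - 1 + 1 = m := by omega
    rw [this, hb]
  -- every generator is at least a and at most 1 + (2m-2)d
  have hGbound : ∀ g ∈ G, a ≤ g ∧ g ≤ 1 + (2 * (m - 1)) * d := by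
    intro g hg
    rw [hG] at hg
    obtain ⟨j, hj, rfl⟩ := hg
    constructor
    · exact Nat.add_le_add_left (Nat.mul_le_mul_right d (by omega)) 1
    · exact Nat.add_le_add_left (Nat.mul_le_mul_right d (by omega)) 1
  -- every nonzero element of the closure is ≥ a
  have hlow : ∀ n ∈ AddSubmonoid.closure G, n = 0 ∨ a ≤ n := by
    intro n hn
    induction hn using AddSubmonoid.closure_induction with
    | mem g hg => exact Or.inr (hGbound g hg).1
    | zero => exact Or.inl rfl
    | add x y _ _ hx hy => rcases hx with rfl | hx <;> rcases hy with rfl | hy <;> omega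
  have hane : a ≠ 0 := by omega
  have hatoms : ∀ g ∈ G, IsAtomOf (AddSubmonoid.closure G) g := by
    intro g hg
    obtain ⟨hga, hgb⟩ := hGbound g hg
    refine ⟨AddSubmonoid.subset_closure hg, by omega, ?_⟩
    intro x y hx hy hx0 hy0 hgxy
    have h1 := hlow x hx
    have h2 := hlow y hy
    have : 2 * ((m - 1) * d) = 2 * (m - 1) * d := by ring
    omega
  refine ⟨?_, hatoms, ?_⟩
  · -- numerical monoid
    have hcop : Nat.Coprime a b := by
      have h1 : Nat.Coprime a d :=
        (Nat.coprime_add_mul_right_left 1 d (m - 1)).2 (Nat.coprime_one_left d)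
      have hmd : m * d = (m - 1) * d + d := by
        have hm1 : m = (m - 1) + 1 := by omega
        conv_lhs => rw [hm1]
        rw [Nat.add_mul, one_mul]
      have hba : b = a + d := by omega
      rw [hba, Nat.add_comm a d]
      exact Nat.coprime_add_self_right.2 h1
    apply Set.Finite.subset (Set.finite_Iio (a * b))
    intro n hn
    simp only [Set.mem_compl_iff, SetLike.mem_coe] at hn
    by_contra hlt
    simp only [Set.mem_Iio, not_lt] at hlt
    obtain ⟨x, y, hxy⟩ := exists_rep a b (by omega) hcop n hlt
    apply hn
    rw [hxy]
    exact AddSubmonoid.add_mem _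
      (by simpa [smul_eq_mul] using (AddSubmonoid.closure G).nsmul_mem (AddSubmonoid.subset_closure haG) x)
      (by simpa [smul_eq_mul] using (AddSubmonoid.closure G).nsmul_mem (AddSubmonoid.subset_closure hbG) y)
  · -- atomSet = G
    ext u
    constructor
    · rintro ⟨huH, hu0, hatom⟩
      obtain ⟨l, hl, hsum⟩ := AddSubmonoid.exists_list_of_mem_closure huH
      match l, hl, hsum with
      | [], _, hsum => exact absurd hsum.symm hu0
      | [g], hl, hsum =>
        have : u = g := by simpa using hsum.symm
        exact this ▸ hl g (by simp)
      | g :: g' :: t, hl, hsum =>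
        exfalso
        have hgG : g ∈ G := hl g (by simp)
        have hg'G : g' ∈ G := hl g' (by simp)
        have hrest : (g' :: t).sum ∈ AddSubmonoid.closure G :=
          AddSubmonoid.list_sum_mem _ (fun x hx => AddSubmonoid.subset_closure (hl x (by simp [hx])))
        have hg0 : g ≠ 0 := by have := (hGbound g hgG).1; omega
        have hrest0 : (g' :: t).sum ≠ 0 := by
          have := (hGbound g' hg'G).1
          simp only [List.sum_cons]
          omega
        exact hatom g (g' :: t).sum (AddSubmonoid.subset_closure hgG) hrest hg0 hrest0
          (by rw [← hsum, List.sum_cons])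
    · exact fun hu => hatoms u hu
end

section
/- Let H be a numerical monoid whose set of atoms is {n₁, n₂, n₃} with 1 < n₁ < n₂ < n₃. If {3} ∉ 𝓛(H), then 2n₁ + n₂ = 2n₃ and 3n₁ ∈ {2n₂, n₂ + n₃}. -/
/-- Counting lemma: a multiset supported on `{n₁,n₂,n₃}` has card `a+b+c` and sum
`a*n₁+b*n₂+c*n₃`. -/
lemma count3 (n₁ n₂ n₃ : ℕ) (s : Multiset ℕ)
    (h : ∀ u ∈ s, u = n₁ ∨ u = n₂ ∨ u = n₃) :
    ∃ a b c : ℕ, Multiset.card s = a + b + c ∧ s.sum = a * n₁ + b * n₂ + c * n₃ := by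
  induction s using Multiset.induction_on with
  | empty => exact ⟨0, 0, 0, by simp, by simp⟩
  | cons x s ih =>
    obtain ⟨a, b, c, h1, h2⟩ := ih fun u hu => h u (Multiset.mem_cons_of_mem hu)
    rcases h x (Multiset.mem_cons_self x s) with rfl | rfl | rfl
    · exact ⟨a + 1, b, c, by simp [h1]; ring, by simp [h2]; ring⟩
    · exact ⟨a, b + 1, c, by simp [h1]; ring, by simp [h2]; ring⟩
    · exact ⟨a, b, c + 1, by simp [h1]; ring, by simp [h2]; ring⟩

lemma exists_len (H : AddSubmonoid ℕ) (h3 : ({3} : Set ℕ) ∉ systemOfLengths H)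
    (v : ℕ) (hv : v ∈ H) (hv3 : 3 ∈ lengthSet H v) :
    ∃ k ∈ lengthSet H v, k ≠ 3 := by
  by_contra hcon
  push_neg at hcon
  apply h3
  refine ⟨v, hv, ?_⟩
  ext k
  simp only [Set.mem_singleton_iff]
  exact ⟨fun h => h ▸ hv3, fun h => hcon k h⟩

theorem stmt_15 (H : AddSubmonoid ℕ) (hH : IsNumericalMonoid H)
    (n₁ n₂ n₃ : ℕ) (h1 : 1 < n₁) (h12 : n₁ < n₂) (h23 : n₂ < n₃)
    (hatoms : atomSet H = {n₁, n₂, n₃})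
    (h3 : ({3} : Set ℕ) ∉ systemOfLengths H) :
    2 * n₁ + n₂ = 2 * n₃ ∧ (3 * n₁ = 2 * n₂ ∨ 3 * n₁ = n₂ + n₃) := by
  have hA1 : IsAtomOf H n₁ := by
    have : n₁ ∈ atomSet H := by rw [hatoms]; simp
    exact this
  have hA2 : IsAtomOf H n₂ := by
    have : n₂ ∈ atomSet H := by rw [hatoms]; simp
    exact this
  have hA3 : IsAtomOf H n₃ := by
    have : n₃ ∈ atomSet H := by rw [hatoms]; simp
    exact this
  have hn1 : n₁ ≠ 0 := by omega
  have hn2 : n₂ ≠ 0 := by omega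
  have hn12 : n₁ + n₂ ≠ 0 := by omega
  have hm1 : n₁ ∈ H := hA1.1
  have hm2 : n₂ ∈ H := hA2.1
  have hm12 : n₁ + n₂ ∈ H := add_mem hm1 hm2
  -- basic facts from atomicity
  have hF1 : n₂ ≠ 2 * n₁ := fun h => hA2.2.2 n₁ n₁ hm1 hm1 hn1 hn1 (by omega)
  have hF2 : n₃ ≠ 2 * n₁ := fun h => hA3.2.2 n₁ n₁ hm1 hm1 hn1 hn1 (by omega)
  have hF3 : n₃ ≠ n₁ + n₂ := fun h => hA3.2.2 n₁ n₂ hm1 hm2 hn1 hn2 h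
  have hF4 : n₃ ≠ 2 * n₁ + n₂ := fun h =>
    hA3.2.2 n₁ (n₁ + n₂) hm1 hm12 hn1 hn12 (by omega)
  have atom_mem : ∀ s : Multiset ℕ, (∀ u ∈ s, IsAtomOf H u) →
      ∀ u ∈ s, u = n₁ ∨ u = n₂ ∨ u = n₃ := by
    intro s hs u hu
    have h' : u ∈ ({n₁, n₂, n₃} : Set ℕ) := hatoms ▸ (hs u hu)
    simpa using h'
  -- Step 1 : 2*n₁ + n₂ = 2*n₃
  have key1 : 2 * n₁ + n₂ = 2 * n₃ := by
    have hvmem : 2 * n₁ + n₂ ∈ H := by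
      have : 2 * n₁ + n₂ = n₁ + (n₁ + n₂) := by ring
      rw [this]; exact add_mem hm1 hm12
    have h3len : (3 : ℕ) ∈ lengthSet H (2 * n₁ + n₂) := by
      refine ⟨{n₁, n₁, n₂}, by simp, ?_, by simp; ring⟩
      intro u hu
      simp only [Multiset.insert_eq_cons, Multiset.mem_cons, Multiset.mem_singleton] at hu
      rcases hu with rfl | rfl | rfl <;> first | exact hA1 | exact hA2
    obtain ⟨k, hkL, hk3⟩ := exists_len H h3 _ hvmem h3len
    obtain ⟨s, hcard, hsa, hsum⟩ := hkL
    obtain ⟨a, b, c, hk, he⟩ := count3 n₁ n₂ n₃ s (atom_mem s hsa)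
    rw [hsum] at he
    rw [hcard] at hk
    rcases Nat.eq_zero_or_pos (b + c) with h0 | hpos
    · exfalso
      have hb0 : b = 0 := by omega
      have hc0 : c = 0 := by omega
      subst hb0; subst hc0
      simp only [Nat.zero_mul, Nat.add_zero] at he
      have ha4 : 4 ≤ a := by
        by_contra hcon
        push_neg at hcon
        have : a * n₁ ≤ 3 * n₁ := Nat.mul_le_mul_right _ (by omega)
        omega
      obtain ⟨j, rfl⟩ : ∃ j, a = j + 4 := ⟨a - 4, by omega⟩
      have heq2 : n₂ = n₁ + (j + 1) * n₁ := by
        have : (j + 4) * n₁ = j * n₁ + 4 * n₁ := by ring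
        have h2 : n₁ + (j + 1) * n₁ = j * n₁ + 2 * n₁ := by ring
        omega
      exact hA2.2.2 n₁ ((j + 1) * n₁) hm1
        (by
          have h : (j + 1) • n₁ ∈ H := nsmul_mem hm1 (j + 1)
          simpa [smul_eq_mul] using h) hn1
        (Nat.mul_ne_zero (Nat.succ_ne_zero j) hn1) heq2
    · have hmin : n₂ ≤ b * n₂ + c * n₃ := by
        rcases Nat.eq_zero_or_pos b with hb | hb
        · have h' : n₃ ≤ c * n₃ := Nat.le_mul_of_pos_left _ (by omega)
          have := Nat.zero_le (b * n₂)
          omega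
        · have h' : n₂ ≤ b * n₂ := Nat.le_mul_of_pos_left _ hb
          have := Nat.zero_le (c * n₃)
          omega
      have ha : a ≤ 2 := by
        by_contra hcon
        push_neg at hcon
        have : 3 * n₁ ≤ a * n₁ := Nat.mul_le_mul_right _ hcon
        omega
      have hb : b ≤ 2 := by
        by_contra hcon
        push_neg at hcon
        have : 3 * n₂ ≤ b * n₂ := Nat.mul_le_mul_right _ hcon
        have := Nat.zero_le (a * n₁)
        have := Nat.zero_le (c * n₃)
        omega
      have hc : c ≤ 2 := by
        by_contra hcon
        push_neg at hcon
        have : 3 * n₃ ≤ c * n₃ := Nat.mul_le_mul_right _ hcon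
        have := Nat.zero_le (a * n₁)
        have := Nat.zero_le (b * n₂)
        omega
      interval_cases a <;> interval_cases b <;> interval_cases c <;> omega
  -- Step 2 : 3*n₁ = 2*n₂ ∨ 3*n₁ = n₂ + n₃
  refine ⟨key1, ?_⟩
  have hvmem : 3 * n₁ ∈ H := by
    have : 3 * n₁ = n₁ + (n₁ + n₁) := by ring
    rw [this]; exact add_mem hm1 (add_mem hm1 hm1)
  have h3len : (3 : ℕ) ∈ lengthSet H (3 * n₁) := by
    refine ⟨{n₁, n₁, n₁}, by simp, ?_, by simp; ring⟩
    intro u hu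
    simp only [Multiset.insert_eq_cons, Multiset.mem_cons, Multiset.mem_singleton] at hu
    rcases hu with rfl | rfl | rfl <;> exact hA1
  obtain ⟨k, hkL, hk3⟩ := exists_len H h3 _ hvmem h3len
  obtain ⟨s, hcard, hsa, hsum⟩ := hkL
  obtain ⟨a, b, c, hk, he⟩ := count3 n₁ n₂ n₃ s (atom_mem s hsa)
  rw [hsum] at he
  rw [hcard] at hk
  rcases Nat.eq_zero_or_pos (b + c) with h0 | hpos
  · exfalso
    have hb0 : b = 0 := by omega
    have hc0 : c = 0 := by omega
    subst hb0; subst hc0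
    simp only [Nat.zero_mul, Nat.add_zero] at he
    have h0 : 0 < n₁ := by omega
    have : a = 3 := Nat.eq_of_mul_eq_mul_right h0 he.symm
    omega
  · have hmin : n₂ ≤ b * n₂ + c * n₃ := by
      rcases Nat.eq_zero_or_pos b with hb | hb
      · have h' : n₃ ≤ c * n₃ := Nat.le_mul_of_pos_left _ (by omega)
        have := Nat.zero_le (b * n₂)
        omega
      · have h' : n₂ ≤ b * n₂ := Nat.le_mul_of_pos_left _ hb
        have := Nat.zero_le (c * n₃)
        omega
    have ha : a ≤ 2 := by
      by_contra hcon
      push_neg at hcon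
      have : 3 * n₁ ≤ a * n₁ := Nat.mul_le_mul_right _ hcon
      omega
    have hb : b ≤ 2 := by
      by_contra hcon
      push_neg at hcon
      have : 3 * n₂ ≤ b * n₂ := Nat.mul_le_mul_right _ hcon
      have := Nat.zero_le (a * n₁)
      have := Nat.zero_le (c * n₃)
      omega
    have hc : c ≤ 2 := by
      by_contra hcon
      push_neg at hcon
      have : 3 * n₃ ≤ c * n₃ := Nat.mul_le_mul_right _ hcon
      have := Nat.zero_le (a * n₁)
      have := Nat.zero_le (b * n₂)
      omega
    interval_cases a <;> interval_cases b <;> interval_cases c <;> omega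
end

section
/- Let H be a numerical monoid whose set of atoms is {n₁, n₂, n₃, n₄} with 1 < n₁ < n₂ < n₃ < n₄. If {3} ∉ 𝓛(H), then 2 ∈ L(3n₁), 2 ∈ L(2n₁ + n₂), and 2 ∈ L(2n₁ + n₃); consequently 2n₁ + n₂ ≥ 2n₃ and 2n₁ + n₃ ≥ n₂ + n₄. -/
lemma len_mem_two (H : AddSubmonoid ℕ) {u v a : ℕ} (hu : IsAtomOf H u) (hv : IsAtomOf H v)
    (h : u + v = a) : 2 ∈ lengthSet H a := by
  refine ⟨{u, v}, by simp, ?_, by simp [h]⟩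
  intro x hx
  rcases Multiset.mem_cons.mp hx with rfl | hx
  · exact hu
  · rw [Multiset.mem_singleton.mp hx]; exact hv

lemma len_mem_three (H : AddSubmonoid ℕ) {u v w a : ℕ} (hu : IsAtomOf H u) (hv : IsAtomOf H v)
    (hw : IsAtomOf H w) (h : u + v + w = a) : 3 ∈ lengthSet H a := by
  refine ⟨{u, v, w}, by simp, ?_, by simp [← h]; ring⟩
  intro x hx
  rcases Multiset.mem_cons.mp hx with rfl | hx
  · exact hu
  rcases Multiset.mem_cons.mp hx with rfl | hx
  · exact hv
  · rw [Multiset.mem_singleton.mp hx]; exact hw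

lemma len_two_elim (H : AddSubmonoid ℕ) {a : ℕ} (h : 2 ∈ lengthSet H a) :
    ∃ u v, IsAtomOf H u ∧ IsAtomOf H v ∧ u + v = a := by
  obtain ⟨s, hcard, hat, hsum⟩ := h
  obtain ⟨u, v, rfl⟩ := Multiset.card_eq_two.mp hcard
  exact ⟨u, v, hat u (by simp), hat v (by simp), by simpa using hsum⟩

lemma len_lb {H : AddSubmonoid ℕ} {n₁ a k : ℕ} (hmin : ∀ u, IsAtomOf H u → n₁ ≤ u)
    (h : k ∈ lengthSet H a) : k * n₁ ≤ a := by
  obtain ⟨s, hcard, hat, hsum⟩ := h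
  have := Multiset.card_nsmul_le_sum (s := s) (fun x hx => hmin x (hat x hx))
  rwa [hcard, smul_eq_mul, hsum] at this

lemma get_two (H : AddSubmonoid ℕ) (h3sys : ({3} : Set ℕ) ∉ systemOfLengths H) {a n₁ : ℕ}
    (haH : a ∈ H) (hmin : ∀ u, IsAtomOf H u → n₁ ≤ u) (hna : ¬ IsAtomOf H a) (ha0 : a ≠ 0)
    (hlt : a < 4 * n₁) (h3 : 3 ∈ lengthSet H a) : 2 ∈ lengthSet H a := by
  by_contra h2
  apply h3sys
  refine ⟨a, haH, ?_⟩
  ext k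
  simp only [Set.mem_singleton_iff]
  constructor
  · rintro rfl; exact h3
  · intro hk
    have hub : k * n₁ ≤ a := len_lb hmin hk
    have hk4 : k < 4 := by
      by_contra hge
      push_neg at hge
      have : 4 * n₁ ≤ k * n₁ := Nat.mul_le_mul_right _ hge
      omega
    obtain ⟨s, hcard, hat, hsum⟩ := hk
    interval_cases k
    · exact absurd (by simpa [Multiset.card_eq_zero.mp hcard] using hsum.symm) ha0
    · obtain ⟨u, rfl⟩ := Multiset.card_eq_one.mp hcard
      have := hat u (by simp)
      simp only [Multiset.sum_singleton] at hsum
      exact absurd (hsum ▸ this) hna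
    · exact absurd ⟨s, hcard, hat, hsum⟩ h2
    · rfl

theorem stmt_16 (H : AddSubmonoid ℕ) (hH : IsNumericalMonoid H)
    (n₁ n₂ n₃ n₄ : ℕ) (h1 : 1 < n₁) (h12 : n₁ < n₂) (h23 : n₂ < n₃) (h34 : n₃ < n₄)
    (hatoms : atomSet H = {n₁, n₂, n₃, n₄})
    (h3 : ({3} : Set ℕ) ∉ systemOfLengths H) :
    2 ∈ lengthSet H (3 * n₁) ∧ 2 ∈ lengthSet H (2 * n₁ + n₂) ∧
    2 ∈ lengthSet H (2 * n₁ + n₃) ∧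
    2 * n₃ ≤ 2 * n₁ + n₂ ∧ n₂ + n₄ ≤ 2 * n₁ + n₃ := by
  have hA : ∀ u, IsAtomOf H u ↔ u ∈ ({n₁, n₂, n₃, n₄} : Set ℕ) := by
    intro u; rw [← hatoms]; rfl
  have hcases : ∀ u, IsAtomOf H u → u = n₁ ∨ u = n₂ ∨ u = n₃ ∨ u = n₄ := by
    intro u hu
    have := (hA u).mp hu
    simpa using this
  have ha1 : IsAtomOf H n₁ := (hA n₁).mpr (by simp)
  have ha2 : IsAtomOf H n₂ := (hA n₂).mpr (by simp)
  have ha3 : IsAtomOf H n₃ := (hA n₃).mpr (by simp)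
  have hmin : ∀ u, IsAtomOf H u → n₁ ≤ u := by
    intro u hu
    rcases hcases u hu with rfl | rfl | rfl | rfl <;> omega
  have h1H : n₁ ∈ H := ha1.1
  have h2H : n₂ ∈ H := ha2.1
  have h3H : n₃ ∈ H := ha3.1
  have hnotatom : ∀ x y : ℕ, x ∈ H → y ∈ H → x ≠ 0 → y ≠ 0 → ¬ IsAtomOf H (x + y) := by
    intro x y hx hy hx0 hy0 h
    exact h.2.2 x y hx hy hx0 hy0 rfl
  -- Step 1: 2 ∈ L(3n₁)
  have hna1 : ¬ IsAtomOf H (3 * n₁) := by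
    have := hnotatom n₁ (2 * n₁) h1H (by simpa [two_mul] using H.add_mem h1H h1H) (by omega) (by omega)
    rwa [show n₁ + 2 * n₁ = 3 * n₁ by ring] at this
  have H2a : 2 ∈ lengthSet H (3 * n₁) := by
    refine get_two H h3 ?_ hmin hna1 (by omega) (by omega) ?_
    · have := H.add_mem (H.add_mem h1H h1H) h1H
      rwa [show n₁ + n₁ + n₁ = 3 * n₁ by ring] at this
    · exact len_mem_three H ha1 ha1 ha1 (by ring)
  -- n₂ < 2n₁
  have hn2lt : n₂ < 2 * n₁ := by
    obtain ⟨u, v, hu, hv, huv⟩ := len_two_elim H H2a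
    have hu1 : u ≠ n₁ := by
      intro he
      have hv2 : v = n₁ + n₁ := by omega
      exact hnotatom n₁ n₁ h1H h1H (by omega) (by omega) (hv2 ▸ hv)
    have hv1 : v ≠ n₁ := by
      intro he
      have hu2 : u = n₁ + n₁ := by omega
      exact hnotatom n₁ n₁ h1H h1H (by omega) (by omega) (hu2 ▸ hu)
    have hun2 : n₂ ≤ u := by rcases hcases u hu with rfl | rfl | rfl | rfl <;> omega
    have hvn2 : n₂ ≤ v := by rcases hcases v hv with rfl | rfl | rfl | rfl <;> omega
    omega
  -- Step 2: 2 ∈ L(2n₁ + n₂)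
  have hna2 : ¬ IsAtomOf H (2 * n₁ + n₂) := by
    have := hnotatom n₁ (n₁ + n₂) h1H (H.add_mem h1H h2H) (by omega) (by omega)
    rwa [show n₁ + (n₁ + n₂) = 2 * n₁ + n₂ by ring] at this
  have H2b : 2 ∈ lengthSet H (2 * n₁ + n₂) := by
    refine get_two H h3 ?_ hmin hna2 (by omega) (by omega) ?_
    · have := H.add_mem (H.add_mem h1H h1H) h2H
      rwa [show n₁ + n₁ + n₂ = 2 * n₁ + n₂ by ring] at this
    · exact len_mem_three H ha1 ha1 ha2 (by ring)
  -- 2n₃ ≤ 2n₁ + n₂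
  have hkey : 2 * n₃ ≤ 2 * n₁ + n₂ := by
    obtain ⟨u, v, hu, hv, huv⟩ := len_two_elim H H2b
    have hnb : ∀ w z : ℕ, IsAtomOf H w → IsAtomOf H z → w + z = 2 * n₁ + n₂ →
        w ≠ n₁ ∧ w ≠ n₂ := by
      intro w z hw hz hwz
      constructor
      · intro he
        have hz2 : z = n₁ + n₂ := by omega
        exact hnotatom n₁ n₂ h1H h2H (by omega) (by omega) (hz2 ▸ hz)
      · intro he
        have hz2 : z = n₁ + n₁ := by omega
        exact hnotatom n₁ n₁ h1H h1H (by omega) (by omega) (hz2 ▸ hz)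
    obtain ⟨hu1, hu2⟩ := hnb u v hu hv huv
    obtain ⟨hv1, hv2⟩ := hnb v u hv hu (by omega)
    have hun3 : n₃ ≤ u := by rcases hcases u hu with rfl | rfl | rfl | rfl <;> omega
    have hvn3 : n₃ ≤ v := by rcases hcases v hv with rfl | rfl | rfl | rfl <;> omega
    omega
  -- Step 3: 2 ∈ L(2n₁ + n₃)
  have hna3 : ¬ IsAtomOf H (2 * n₁ + n₃) := by
    have := hnotatom n₁ (n₁ + n₃) h1H (H.add_mem h1H h3H) (by omega) (by omega)
    rwa [show n₁ + (n₁ + n₃) = 2 * n₁ + n₃ by ring] at this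
  have H2c : 2 ∈ lengthSet H (2 * n₁ + n₃) := by
    refine get_two H h3 ?_ hmin hna3 (by omega) (by omega) ?_
    · have := H.add_mem (H.add_mem h1H h1H) h3H
      rwa [show n₁ + n₁ + n₃ = 2 * n₁ + n₃ by ring] at this
    · exact len_mem_three H ha1 ha1 ha3 (by ring)
  have hkey2 : n₂ + n₄ ≤ 2 * n₁ + n₃ := by
    obtain ⟨u, v, hu, hv, huv⟩ := len_two_elim H H2c
    have hnb : ∀ w z : ℕ, IsAtomOf H w → IsAtomOf H z → w + z = 2 * n₁ + n₃ → w ≠ n₁ := by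
      intro w z hw hz hwz
      intro he
      have hz2 : z = n₁ + n₃ := by omega
      exact hnotatom n₁ n₃ h1H h3H (by omega) (by omega) (hz2 ▸ hz)
    have hu1 := hnb u v hu hv huv
    have hv1 := hnb v u hv hu (by omega)
    rcases hcases u hu with rfl | rfl | rfl | rfl <;>
      rcases hcases v hv with rfl | rfl | rfl | rfl <;> omega
  exact ⟨H2a, H2b, H2c, hkey, hkey2⟩
end

section
/- Let H be a numerical monoid whose set of atoms is {n₁, n₂, n₃, n₄, n₅} with 1 < n₁ < n₂ < n₃ < n₄ < n₅. If {3} ∉ 𝓛(H), then 2 ∈ L(2n₁ + n₄) and 2n₁ + n₄ ∈ {n₂ + n₅, n₃ + n₅, 2n₅}. -/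
/- ### Auxiliary lemmas -/

lemma aux_sum_mem (H : AddSubmonoid ℕ) (s : Multiset ℕ) (h : ∀ u ∈ s, u ∈ H) :
    s.sum ∈ H := by
  induction s using Multiset.induction_on with
  | empty => simpa using H.zero_mem
  | cons a t ih =>
    rw [Multiset.sum_cons]
    exact H.add_mem (h a (Multiset.mem_cons_self a t))
      (ih fun u hu => h u (Multiset.mem_cons_of_mem hu))

lemma aux_sum_ge (c : ℕ) (s : Multiset ℕ) (h : ∀ u ∈ s, c ≤ u) :
    Multiset.card s * c ≤ s.sum := by
  induction s using Multiset.induction_on with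
  | empty => simp
  | cons a t ih =>
    rw [Multiset.card_cons, Multiset.sum_cons, Nat.add_mul, Nat.one_mul]
    have h1 := ih (fun u hu => h u (Multiset.mem_cons_of_mem hu))
    have h2 := h a (Multiset.mem_cons_self a t)
    omega

/-- If `{3} ∉ 𝓛(H)` and `x, y, z` are atoms, then `x + y + z` has a factorization of
length `k ≠ 3`. -/
lemma aux_getRep (H : AddSubmonoid ℕ) (h3 : ({3} : Set ℕ) ∉ systemOfLengths H)
    (x y z : ℕ) (hx : IsAtomOf H x) (hy : IsAtomOf H y) (hz : IsAtomOf H z) :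
    ∃ (k : ℕ) (s : Multiset ℕ), k ≠ 3 ∧ Multiset.card s = k ∧
      (∀ u ∈ s, IsAtomOf H u) ∧ s.sum = x + y + z := by
  have hmem : x + y + z ∈ H := H.add_mem (H.add_mem hx.1 hy.1) hz.1
  have h3mem : 3 ∈ lengthSet H (x + y + z) := by
    refine ⟨{x, y, z}, by simp, ?_, ?_⟩
    · intro u hu
      simp only [Multiset.insert_eq_cons, Multiset.mem_cons, Multiset.mem_singleton] at hu
      rcases hu with rfl | rfl | rfl <;> assumption
    · simp [add_assoc]
  by_contra hcon
  push_neg at hcon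
  refine h3 ⟨x + y + z, hmem, ?_⟩
  ext k
  simp only [Set.mem_singleton_iff]
  constructor
  · rintro rfl; exact h3mem
  · rintro ⟨s, hcard, hat, hsum⟩
    by_contra hk
    exact hcon k s hk hcard hat hsum

theorem stmt_17 (H : AddSubmonoid ℕ) (hH : IsNumericalMonoid H)
    (n₁ n₂ n₃ n₄ n₅ : ℕ) (h1 : 1 < n₁) (h12 : n₁ < n₂) (h23 : n₂ < n₃) (h34 : n₃ < n₄)
    (h45 : n₄ < n₅)
    (hatoms : atomSet H = {n₁, n₂, n₃, n₄, n₅})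
    (h3 : ({3} : Set ℕ) ∉ systemOfLengths H) :
    2 ∈ lengthSet H (2 * n₁ + n₄) ∧
    (2 * n₁ + n₄ = n₂ + n₅ ∨ 2 * n₁ + n₄ = n₃ + n₅ ∨ 2 * n₁ + n₄ = 2 * n₅) := by
  -- atom characterization
  have hA : ∀ u, IsAtomOf H u ↔ (u = n₁ ∨ u = n₂ ∨ u = n₃ ∨ u = n₄ ∨ u = n₅) := by
    intro u
    constructor
    · intro h
      have hu : u ∈ atomSet H := h
      rw [hatoms] at hu
      simpa using hu
    · intro h
      have hu : u ∈ ({n₁, n₂, n₃, n₄, n₅} : Set ℕ) := by simpa using h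
      rw [← hatoms] at hu
      exact hu
  have a1 : IsAtomOf H n₁ := (hA n₁).2 (by tauto)
  have a2 : IsAtomOf H n₂ := (hA n₂).2 (by tauto)
  have a3 : IsAtomOf H n₃ := (hA n₃).2 (by tauto)
  have a4 : IsAtomOf H n₄ := (hA n₄).2 (by tauto)
  have a5 : IsAtomOf H n₅ := (hA n₅).2 (by tauto)
  have m1 : n₁ ∈ H := a1.1
  have m2 : n₂ ∈ H := a2.1
  have m3 : n₃ ∈ H := a3.1
  have m4 : n₄ ∈ H := a4.1
  have nz1 : n₁ ≠ 0 := a1.2.1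
  have hge : ∀ u, IsAtomOf H u → n₁ ≤ u := by
    intro u hu
    rcases (hA u).1 hu with rfl | rfl | rfl | rfl | rfl <;> omega
  -- non-atom facts
  have e2 : n₂ ≠ n₁ + n₁ := a2.2.2 n₁ n₁ m1 m1 nz1 nz1
  have e3 : n₃ ≠ n₁ + n₁ := a3.2.2 n₁ n₁ m1 m1 nz1 nz1
  have e4 : n₄ ≠ n₁ + n₁ := a4.2.2 n₁ n₁ m1 m1 nz1 nz1
  have e5 : n₅ ≠ n₁ + n₁ := a5.2.2 n₁ n₁ m1 m1 nz1 nz1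
  have l5' : n₅ ≠ n₁ + n₄ := a5.2.2 n₁ n₄ m1 m4 nz1 a4.2.1
  have A5a : n₅ ≠ n₁ + (n₁ + n₄) :=
    a5.2.2 n₁ (n₁ + n₄) m1 (H.add_mem m1 m4) nz1 (by omega)
  -- bound on length of factorizations of small elements
  have kbound : ∀ (k : ℕ) (s : Multiset ℕ), Multiset.card s = k →
      (∀ u ∈ s, IsAtomOf H u) → s.sum < 4 * n₁ → k ≤ 3 := by
    intro k s hc hat hlt
    by_contra hk
    have hb := aux_sum_ge n₁ s (fun u hu => hge u (hat u hu))
    rw [hc] at hb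
    have h4 : 4 * n₁ ≤ k * n₁ := Nat.mul_le_mul (by omega) le_rfl
    omega
  rcases Nat.lt_or_ge n₄ (2 * n₁) with hlt | hge4
  · -- CASE n₄ < 2n₁
    obtain ⟨k, s, hk3, hcard, hat, hsum⟩ := aux_getRep H h3 n₁ n₁ n₄ a1 a1 a4
    have hkle : k ≤ 3 := kbound k s hcard hat (by omega)
    have hkle2 : k ≤ 2 := by omega
    interval_cases k
    · exfalso
      rw [Multiset.card_eq_zero] at hcard
      subst hcard
      simp at hsum
      omega
    · exfalso
      rw [Multiset.card_eq_one] at hcard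
      obtain ⟨u, rfl⟩ := hcard
      have hu : IsAtomOf H u := hat u (by simp)
      simp at hsum
      rcases (hA u).1 hu with rfl | rfl | rfl | rfl | rfl <;> omega
    · rw [Multiset.card_eq_two] at hcard
      obtain ⟨u, v, rfl⟩ := hcard
      have hu : IsAtomOf H u := hat u (by simp)
      have hv : IsAtomOf H v := hat v (by simp)
      have huv : u + v = n₁ + n₁ + n₄ := by simpa using hsum
      refine ⟨⟨{u, v}, by simp, hat, by simp; omega⟩, ?_⟩
      rcases (hA u).1 hu with rfl | rfl | rfl | rfl | rfl <;>
        rcases (hA v).1 hv with rfl | rfl | rfl | rfl | rfl <;> omega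
  · -- CASE n₄ > 2n₁ (n₄ = 2n₁ impossible)
    have hgt : 2 * n₁ < n₄ := by omega
    -- Step 1: relations for 3n₁
    have hL1 : 2 * n₂ = 3 * n₁ ∨ n₂ + n₃ = 3 * n₁ ∨ 2 * n₃ = 3 * n₁ := by
      obtain ⟨k, s, hk3, hcard, hat, hsum⟩ := aux_getRep H h3 n₁ n₁ n₁ a1 a1 a1
      have t2 : n₂ ≠ n₁ + (n₁ + n₁) :=
        a2.2.2 n₁ (n₁ + n₁) m1 (H.add_mem m1 m1) nz1 (by omega)
      have t3 : n₃ ≠ n₁ + (n₁ + n₁) :=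
        a3.2.2 n₁ (n₁ + n₁) m1 (H.add_mem m1 m1) nz1 (by omega)
      have t4 : n₄ ≠ n₁ + (n₁ + n₁) :=
        a4.2.2 n₁ (n₁ + n₁) m1 (H.add_mem m1 m1) nz1 (by omega)
      have t5 : n₅ ≠ n₁ + (n₁ + n₁) :=
        a5.2.2 n₁ (n₁ + n₁) m1 (H.add_mem m1 m1) nz1 (by omega)
      have hkle : k ≤ 3 := kbound k s hcard hat (by omega)
      have hkle2 : k ≤ 2 := by omega
      interval_cases k
      · rw [Multiset.card_eq_zero] at hcard
        subst hcard
        simp at hsum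
        omega
      · rw [Multiset.card_eq_one] at hcard
        obtain ⟨u, rfl⟩ := hcard
        have hu : IsAtomOf H u := hat u (by simp)
        simp at hsum
        rcases (hA u).1 hu with rfl | rfl | rfl | rfl | rfl <;> omega
      · rw [Multiset.card_eq_two] at hcard
        obtain ⟨u, v, rfl⟩ := hcard
        have hu : IsAtomOf H u := hat u (by simp)
        have hv : IsAtomOf H v := hat v (by simp)
        have huv : u + v = n₁ + n₁ + n₁ := by simpa using hsum
        rcases (hA u).1 hu with rfl | rfl | rfl | rfl | rfl <;>
          rcases (hA v).1 hv with rfl | rfl | rfl | rfl | rfl <;> omega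
    have hn2lt : n₂ < 2 * n₁ := by omega
    -- Step 2: 2n₃ = 2n₁ + n₂
    have hstar : 2 * n₃ = 2 * n₁ + n₂ := by
      obtain ⟨k, s, hk3, hcard, hat, hsum⟩ := aux_getRep H h3 n₁ n₁ n₂ a1 a1 a2
      have f3 : n₃ ≠ n₁ + (n₁ + n₂) :=
        a3.2.2 n₁ (n₁ + n₂) m1 (H.add_mem m1 m2) nz1 (by omega)
      have f4 : n₄ ≠ n₁ + (n₁ + n₂) :=
        a4.2.2 n₁ (n₁ + n₂) m1 (H.add_mem m1 m2) nz1 (by omega)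
      have f5 : n₅ ≠ n₁ + (n₁ + n₂) :=
        a5.2.2 n₁ (n₁ + n₂) m1 (H.add_mem m1 m2) nz1 (by omega)
      have g3 : n₃ ≠ n₁ + n₂ := a3.2.2 n₁ n₂ m1 m2 nz1 a2.2.1
      have g4 : n₄ ≠ n₁ + n₂ := a4.2.2 n₁ n₂ m1 m2 nz1 a2.2.1
      have g5 : n₅ ≠ n₁ + n₂ := a5.2.2 n₁ n₂ m1 m2 nz1 a2.2.1
      have hkle : k ≤ 3 := kbound k s hcard hat (by omega)
      have hkle2 : k ≤ 2 := by omega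
      interval_cases k
      · rw [Multiset.card_eq_zero] at hcard
        subst hcard
        simp at hsum
        omega
      · rw [Multiset.card_eq_one] at hcard
        obtain ⟨u, rfl⟩ := hcard
        have hu : IsAtomOf H u := hat u (by simp)
        simp at hsum
        rcases (hA u).1 hu with rfl | rfl | rfl | rfl | rfl <;> omega
      · rw [Multiset.card_eq_two] at hcard
        obtain ⟨u, v, rfl⟩ := hcard
        have hu : IsAtomOf H u := hat u (by simp)
        have hv : IsAtomOf H v := hat v (by simp)
        have huv : u + v = n₁ + n₁ + n₂ := by simpa using hsum
        rcases (hA u).1 hu with rfl | rfl | rfl | rfl | rfl <;>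
          rcases (hA v).1 hv with rfl | rfl | rfl | rfl | rfl <;> omega
    have hn3lt : n₃ < 2 * n₁ := by omega
    -- Step 3: n₃ + n₄ ≤ 4n₁
    have hw : n₃ + n₄ ≤ 4 * n₁ := by
      obtain ⟨k, s, hk3, hcard, hat, hsum⟩ := aux_getRep H h3 n₁ n₁ n₃ a1 a1 a3
      have f4 : n₄ ≠ n₁ + (n₁ + n₃) :=
        a4.2.2 n₁ (n₁ + n₃) m1 (H.add_mem m1 m3) nz1 (by omega)
      have f5 : n₅ ≠ n₁ + (n₁ + n₃) :=
        a5.2.2 n₁ (n₁ + n₃) m1 (H.add_mem m1 m3) nz1 (by omega)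
      have k4 : n₄ ≠ n₁ + n₃ := a4.2.2 n₁ n₃ m1 m3 nz1 a3.2.1
      have k5 : n₅ ≠ n₁ + n₃ := a5.2.2 n₁ n₃ m1 m3 nz1 a3.2.1
      have hkle : k ≤ 3 := kbound k s hcard hat (by omega)
      have hkle2 : k ≤ 2 := by omega
      interval_cases k
      · rw [Multiset.card_eq_zero] at hcard
        subst hcard
        simp at hsum
        omega
      · rw [Multiset.card_eq_one] at hcard
        obtain ⟨u, rfl⟩ := hcard
        have hu : IsAtomOf H u := hat u (by simp)
        simp at hsum
        rcases (hA u).1 hu with rfl | rfl | rfl | rfl | rfl <;> omega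
      · rw [Multiset.card_eq_two] at hcard
        obtain ⟨u, v, rfl⟩ := hcard
        have hu : IsAtomOf H u := hat u (by simp)
        have hv : IsAtomOf H v := hat v (by simp)
        have huv : u + v = n₁ + n₁ + n₃ := by simpa using hsum
        rcases (hA u).1 hu with rfl | rfl | rfl | rfl | rfl <;>
          rcases (hA v).1 hv with rfl | rfl | rfl | rfl | rfl <;> omega
    -- Main analysis of 2n₁ + n₄
    obtain ⟨k, s, hk3, hcard, hat, hsum⟩ := aux_getRep H h3 n₁ n₁ n₄ a1 a1 a4
    by_cases hkle : k ≤ 3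
    · have hkle2 : k ≤ 2 := by omega
      interval_cases k
      · exfalso
        rw [Multiset.card_eq_zero] at hcard
        subst hcard
        simp at hsum
        omega
      · exfalso
        rw [Multiset.card_eq_one] at hcard
        obtain ⟨u, rfl⟩ := hcard
        have hu : IsAtomOf H u := hat u (by simp)
        simp at hsum
        rcases (hA u).1 hu with rfl | rfl | rfl | rfl | rfl <;> omega
      · rw [Multiset.card_eq_two] at hcard
        obtain ⟨u, v, rfl⟩ := hcard
        have hu : IsAtomOf H u := hat u (by simp)
        have hv : IsAtomOf H v := hat v (by simp)
        have huv : u + v = n₁ + n₁ + n₄ := by simpa using hsum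
        refine ⟨⟨{u, v}, by simp, hat, by simp; omega⟩, ?_⟩
        rcases (hA u).1 hu with rfl | rfl | rfl | rfl | rfl <;>
          rcases (hA v).1 hv with rfl | rfl | rfl | rfl | rfl <;> omega
    · -- k ≥ 4 : derive a contradiction
      exfalso
      have hk4 : 4 ≤ k := by omega
      -- every atom in s is at most n₃
      have hbound : ∀ u ∈ s, u ≤ n₃ := by
        intro u hu
        by_contra hcon
        push_neg at hcon
        have hut : IsAtomOf H u := hat u hu
        set t := s.erase u with ht
        have hct : Multiset.card t = k - 1 := by
          rw [ht, Multiset.card_erase_of_mem hu, hcard]; rfl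
        have hta : ∀ w ∈ t, IsAtomOf H w :=
          fun w hw => hat w (Multiset.mem_of_mem_erase hw)
        have htge := aux_sum_ge n₁ t (fun w hw => hge w (hta w hw))
        have h3n : 3 * n₁ ≤ Multiset.card t * n₁ :=
          Nat.mul_le_mul (by omega) le_rfl
        have hdec : u + t.sum = s.sum := by
          rw [ht, ← Multiset.sum_cons, Multiset.cons_erase hu]
        rcases (hA u).1 hut with rfl | rfl | rfl | rfl | rfl <;> omega
      have hn123 : ∀ u ∈ s, u = n₁ ∨ u = n₂ ∨ u = n₃ := by
        intro u hu
        have := hbound u hu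
        rcases (hA u).1 (hat u hu) with rfl | rfl | rfl | rfl | rfl <;> omega
      by_cases h2a : 2 ≤ Multiset.count n₁ s
      · -- two copies of n₁ : n₄ is a sum of ≥ 2 atoms, contradiction
        have hrep : Multiset.replicate 2 n₁ ≤ s := by
          rw [Multiset.le_iff_count]
          intro b
          rw [Multiset.count_replicate]
          split_ifs with hb
          · subst hb; exact h2a
          · exact Nat.zero_le _
        obtain ⟨t, htdef⟩ := Multiset.le_iff_exists_add.mp hrep
        have hta : ∀ w ∈ t, IsAtomOf H w := by
          intro w hw
          exact hat w (by rw [htdef]; exact Multiset.mem_add.mpr (Or.inr hw))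
        have hts : t.sum = n₄ := by
          rw [htdef] at hsum
          simp [Multiset.sum_replicate] at hsum
          omega
        have hct : 2 ≤ Multiset.card t := by
          rw [htdef] at hcard
          simp at hcard
          omega
        have htne : t ≠ 0 := by
          intro h
          rw [h] at hct
          simp at hct
        obtain ⟨v, hv⟩ := Multiset.exists_mem_of_ne_zero htne
        have hva : IsAtomOf H v := hta v hv
        set t' := t.erase v with ht'
        have hct' : Multiset.card t' = Multiset.card t - 1 := by
          rw [ht', Multiset.card_erase_of_mem hv]; rfl
        have ht'ne : t' ≠ 0 := by
          intro h
          rw [h] at hct'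
          simp at hct'
          omega
        obtain ⟨w, hw⟩ := Multiset.exists_mem_of_ne_zero ht'ne
        have hwa : IsAtomOf H w := hta w (Multiset.mem_of_mem_erase hw)
        have ht'sum : v + t'.sum = t.sum := by
          rw [ht', ← Multiset.sum_cons, Multiset.cons_erase hv]
        have ht'mem : t'.sum ∈ H :=
          aux_sum_mem H t' (fun x hx => (hta x (Multiset.mem_of_mem_erase hx)).1)
        have hwle : w ≤ t'.sum :=
          Multiset.single_le_sum (fun x _ => Nat.zero_le x) w hw
        have hwpos : n₁ ≤ w := hge w hwa
        have := a4.2.2 v t'.sum hva.1 ht'mem hva.2.1 (by omega)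
        omega
      · -- at most one copy of n₁ : sum is too large
        have hge2 : ∀ u ∈ s, u ≠ n₁ → n₂ ≤ u := by
          intro u hu hne
          rcases hn123 u hu with rfl | rfl | rfl <;> omega
        by_cases h0 : n₁ ∈ s
        · -- exactly one copy of n₁
          set t := s.erase n₁ with ht
          have hcnt : Multiset.count n₁ t = 0 := by
            rw [ht, Multiset.count_erase_self]
            have := Multiset.count_pos.mpr h0
            omega
          have hnot : n₁ ∉ t := Multiset.count_eq_zero.mp hcnt
          have htge : ∀ u ∈ t, n₂ ≤ u := by
            intro u hu
            exact hge2 u (Multiset.mem_of_mem_erase hu)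
              (fun h => hnot (h ▸ hu))
          have hct : Multiset.card t = k - 1 := by
            rw [ht, Multiset.card_erase_of_mem h0, hcard]; rfl
          have hsge := aux_sum_ge n₂ t htge
          have h3n : 3 * n₂ ≤ Multiset.card t * n₂ :=
            Nat.mul_le_mul (by omega) le_rfl
          have hdec : n₁ + t.sum = s.sum := by
            rw [ht, ← Multiset.sum_cons, Multiset.cons_erase h0]
          omega
        · -- no copy of n₁
          have htge : ∀ u ∈ s, n₂ ≤ u :=
            fun u hu => hge2 u hu (fun h => h0 (h ▸ hu))
          have hsge := aux_sum_ge n₂ s htge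
          rw [hcard] at hsge
          have h4n : 4 * n₂ ≤ k * n₂ := Nat.mul_le_mul (by omega) le_rfl
          omega
end

section
/- Let H be a numerical monoid with at least two atoms, and let n₁ < n₂ be its two smallest atoms. Then for every N ∈ ℕ, the set {(N−i)·n₁ + i·n₂ : 0 ≤ i ≤ N} is contained in L(N·n₁·n₂). In particular, for every N ∈ ℕ there exists a set of lengths L ∈ 𝓛(H) with |L| ≥ N + 1, so H has arbitrarily large sets of lengths. -/
theorem stmt_18 (H : AddSubmonoid ℕ) (hH : IsNumericalMonoid H)
    (n₁ n₂ : ℕ) (ha₁ : IsAtomOf H n₁) (ha₂ : IsAtomOf H n₂) (h12 : n₁ < n₂)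
    (hmin₁ : ∀ u, IsAtomOf H u → n₁ ≤ u)
    (hmin₂ : ∀ u, IsAtomOf H u → u ≠ n₁ → n₂ ≤ u) :
    (∀ N : ℕ, {k : ℕ | ∃ i ≤ N, k = (N - i) * n₁ + i * n₂}
        ⊆ lengthSet H (N * n₁ * n₂)) ∧
    (∀ N : ℕ, ∃ L ∈ systemOfLengths H, N + 1 ≤ L.ncard) := by
  have hsub : ∀ N : ℕ, {k : ℕ | ∃ i ≤ N, k = (N - i) * n₁ + i * n₂}
      ⊆ lengthSet H (N * n₁ * n₂) := by
    intro N k hk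
    obtain ⟨i, hi, rfl⟩ := hk
    refine ⟨Multiset.replicate ((N - i) * n₁) n₂ + Multiset.replicate (i * n₂) n₁,
      ?_, ?_, ?_⟩
    · simp
    · intro u hu
      simp only [Multiset.mem_add, Multiset.eq_of_mem_replicate] at hu
      rcases hu with h | h
      · exact (Multiset.eq_of_mem_replicate h) ▸ ha₂
      · exact (Multiset.eq_of_mem_replicate h) ▸ ha₁
    · simp only [Multiset.sum_add, Multiset.sum_replicate, smul_eq_mul]
      obtain ⟨j, rfl⟩ : ∃ j, N = j + i := ⟨N - i, by omega⟩
      simp only [Nat.add_sub_cancel]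
      ring
  refine ⟨hsub, fun N => ?_⟩
  have hn1 : 0 < n₁ := Nat.pos_of_ne_zero ha₁.2.1
  set a := N * n₁ * n₂ with ha
  refine ⟨lengthSet H a, ⟨a, ?_, rfl⟩, ?_⟩
  · show N * n₁ * n₂ ∈ H
    have := AddSubmonoid.nsmul_mem H ha₁.1 (N * n₂)
    simpa [smul_eq_mul, mul_comm, mul_assoc, mul_left_comm] using this
  · -- the length set is finite, being contained in Iic a
    have hfin : lengthSet H a ⊆ Set.Iic a := by
      rintro k ⟨s, hcard, hatom, hsum⟩
      have : Multiset.card s • 1 ≤ s.sum :=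
        Multiset.card_nsmul_le_sum fun x hx => Nat.one_le_iff_ne_zero.2 (hatom x hx).2.1
      rw [smul_eq_mul, mul_one] at this
      simpa [hcard, hsum] using this
    have hLfin : (lengthSet H a).Finite := (Set.finite_Iic a).subset hfin
    set g : ℕ → ℕ := fun i => N * n₁ + i * (n₂ - n₁) with hg
    have hginj : Function.Injective g := by
      intro x y hxy
      simp only [hg] at hxy
      exact Nat.eq_of_mul_eq_mul_right (by omega) (Nat.add_left_cancel hxy)
    set T : Finset ℕ := (Finset.range (N + 1)).image g with hT
    have hTcard : T.card = N + 1 := by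
      rw [hT, Finset.card_image_of_injective _ hginj, Finset.card_range]
    have hTsub : (T : Set ℕ) ⊆ lengthSet H a := by
      intro k hk
      simp only [hT, Finset.coe_image, Finset.coe_range, Set.mem_image,
        Set.mem_Iio] at hk
      obtain ⟨i, hi, rfl⟩ := hk
      apply hsub N
      refine ⟨i, by omega, ?_⟩
      have h1 : (N - i) * n₁ = N * n₁ - i * n₁ := Nat.sub_mul N i n₁
      have h2 : i * (n₂ - n₁) = i * n₂ - i * n₁ := Nat.mul_sub_left_distrib i n₂ n₁
      have h3 : i * n₁ ≤ N * n₁ := Nat.mul_le_mul_right _ (by omega)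
      have h4 : i * n₁ ≤ i * n₂ := Nat.mul_le_mul_left _ (le_of_lt h12)
      simp only [hg]
      omega
    calc N + 1 = T.card := hTcard.symm
    _ = (T : Set ℕ).ncard := (Set.ncard_coe_finset T).symm
    _ ≤ (lengthSet H a).ncard := Set.ncard_le_ncard hTsub hLfin
end
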